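/- arXiv:2007.05789 — 7 statements merged into one kernel-verified Lean document; each statement's English description precedes it below -/
import Mathlib

section
/- Let P be a rendez-vous protocol and N_P its associated Petri net. Then for every n ∈ ℕ, the configuration C_f^(n) is reachable from C_i^(n) in P (i.e., C_i^(n) →* C_f^(n)) if and only if the marking M_f^(n) belongs to Reach(M_0) in N_P. -/
/-- Actions labelling edges of a rendez-vous protocol: request (`recv`, written `?a`)
or answer (`send`, written `!a`). -/
inductive RVAct (A : Type) : Type
  | send : A → RVAct A
  | recv : A → RVAct A

/-- A rendez-vous protocol: a finite set of states `Q` partitioned (via `isLeader`)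
into process states and leader states, a finite alphabet `A`, initial/final states for
processes and for the leader, and a set of edges staying within each part. -/
structure RVProtocol (Q A : Type) : Type where
  isLeader : Q → Bool
  qi : Q
  qf : Q
  qiL : Q
  qfL : Q
  hqi : isLeader qi = false
  hqf : isLeader qf = false
  hqiL : isLeader qiL = true
  hqfL : isLeader qfL = true
  E : Set (Q × RVAct A × Q)
  hE : ∀ e ∈ E, isLeader e.1 = isLeader e.2.2

namespace RVProtocol

variable {Q A : Type} [DecidableEq Q] (P : RVProtocol Q A)

/-- A configuration is a multiset of states with exactly one occurrence of a leader state. -/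
def IsConfig (C : Multiset Q) : Prop :=
  (C.filter (fun q => P.isLeader q = true)).card = 1

/-- One rendez-vous step between configurations. -/
def Step (C C' : Multiset Q) : Prop :=
  ∃ (a : A) (q1 q2 q1' q2' : Q),
    (q1, RVAct.recv a, q2) ∈ P.E ∧ (q1', RVAct.send a, q2') ∈ P.E ∧
    0 < C.count q1 ∧ 0 < C.count q1' ∧ 2 ≤ C.count q1 + C.count q1' ∧
    C' = C - {q1, q1'} + {q2, q2'}

/-- Reachability: reflexive-transitive closure of `Step`. -/
def Reach : Multiset Q → Multiset Q → Prop := Relation.ReflTransGen P.Step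

/-- The initial configuration with `n` processes. -/
def Ci (n : ℕ) : Multiset Q := Multiset.replicate n P.qi + {P.qiL}

/-- The final configuration with `n` processes. -/
def Cf (n : ℕ) : Multiset Q := Multiset.replicate n P.qf + {P.qfL}

/-! The Petri net `N_P` associated to a protocol `P`: one place per state of `Q`
(markings are functions `Q → ℕ`), a transition `t_i` producing a token in `p_{q_i}`,
a transition `t_f^L` consuming a token from `p_{q_f^L}`, and for every pair of edges
`(q1,!a,q1')`, `(q2,?a,q2')` a transition with precondition `p_{q1} + p_{q2}` and
postcondition `p_{q1'} + p_{q2'}`.  We describe it by its firing relation. -/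
def NPStep (M M' : Q → ℕ) : Prop :=
  -- transition `t_i`
  (M' = M + Pi.single P.qi 1) ∨
  -- transition `t_f^L`
  (Pi.single P.qfL 1 ≤ M ∧ M' = M - Pi.single P.qfL 1) ∨
  -- rendez-vous transitions
  (∃ (a : A) (q1 q2 q1' q2' : Q),
    (q1, RVAct.send a, q1') ∈ P.E ∧ (q2, RVAct.recv a, q2') ∈ P.E ∧
    Pi.single q1 1 + Pi.single q2 1 ≤ M ∧
    M' = M - (Pi.single q1 1 + Pi.single q2 1) + (Pi.single q1' 1 + Pi.single q2' 1))

/-- Reachability in the Petri net `N_P`. -/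
def NPReach : (Q → ℕ) → (Q → ℕ) → Prop := Relation.ReflTransGen P.NPStep

/-- The initial marking `M_0` of `N_P`: one token in `p_{q_i^L}`, none elsewhere. -/
def M0 : Q → ℕ := Pi.single P.qiL 1

/-- The marking `M_f^{(n)}`: `n` tokens in `p_{q_f}`, none elsewhere. -/
def Mf (n : ℕ) : Q → ℕ := Pi.single P.qf n

end RVProtocol

/-! A protocol run from `C_i^(n)` to `C_f^(n)` never changes the number of agents, since no step
decreases it; so every step of the run is a genuine rendez-vous and fires the corresponding
transition of `N_P` on the associated markings, with `t_i` creating the `n` processes beforehand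
and `t_f^L` removing the leader at the end.

Conversely, a run of `N_P` from `M_0` to `M_f^(n)` is simulated by the protocol on its
completions: processes not yet created by `t_i` wait in `q_i`, and the leader, once removed by
`t_f^L`, stays in `q_f^L`, so that `t_i` and `t_f^L` become stuttering steps. Completions make
sense because along the run process tokens only increase, hence stay `≤ n`, and leader tokens only
decrease, hence stay `≤ 1`. -/

namespace Multiset

variable {α : Type} [DecidableEq α]

theorem le_of_card_tsub_add_le {s t : Multiset α} (h : card (s - t) + card t ≤ card s) :
    t ≤ s := by
  have hs : s = s - t + t := eq_of_le_of_card_le le_tsub_add (by simpa using h)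
  rw [hs]
  exact le_add_self

theorem card_le_card_tsub_add (s t : Multiset α) : card s ≤ card (s - t) + card t := by
  simpa using card_le_card (le_tsub_add : s ≤ s - t + t)

end Multiset

namespace RVProtocol

section Marking

variable {Q : Type} [DecidableEq Q]

def toMarking (C : Multiset Q) : Q → ℕ := fun q => C.count q

@[simp]
theorem toMarking_apply (C : Multiset Q) (q : Q) : toMarking C q = C.count q := rfl

theorem toMarking_injective : Function.Injective (toMarking (Q := Q)) :=
  fun _ _ h => Multiset.ext.2 (congrFun h)

@[simp]
theorem toMarking_le_toMarking {C D : Multiset Q} : toMarking C ≤ toMarking D ↔ C ≤ D :=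
  Multiset.le_iff_count.symm

@[simp]
theorem toMarking_add (C D : Multiset Q) : toMarking (C + D) = toMarking C + toMarking D :=
  funext fun _ => Multiset.count_add _ _ _

@[simp]
theorem toMarking_sub (C D : Multiset Q) : toMarking (C - D) = toMarking C - toMarking D :=
  funext fun _ => Multiset.count_sub _ _ _

@[simp]
theorem toMarking_replicate (k : ℕ) (q : Q) :
    toMarking (Multiset.replicate k q) = Pi.single q k :=
  funext fun x => by simp [Multiset.count_replicate, Pi.single_apply, eq_comm]

@[simp]
theorem toMarking_singleton (q : Q) : toMarking {q} = Pi.single q 1 := by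
  simpa using toMarking_replicate 1 q

@[simp]
theorem toMarking_pair (q q' : Q) : toMarking {q, q'} = Pi.single q 1 + Pi.single q' 1 := by
  rw [Multiset.insert_eq_cons, ← Multiset.singleton_add, toMarking_add, toMarking_singleton,
    toMarking_singleton]

variable [Fintype Q]

def ofMarking (M : Q → ℕ) : Multiset Q := ∑ q, Multiset.replicate (M q) q

@[simp]
theorem toMarking_ofMarking (M : Q → ℕ) : toMarking (ofMarking M) = M :=
  funext fun x => by simp [ofMarking, Multiset.count_sum', Multiset.count_replicate]

theorem ofMarking_toMarking (C : Multiset Q) : ofMarking (toMarking C) = C :=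
  toMarking_injective (toMarking_ofMarking _)

end Marking

section Forward

variable {Q A : Type} [DecidableEq Q] (P : RVProtocol Q A)

theorem step_of_pair_le {a : A} {q₁ q₂ q₁' q₂' : Q} (hrecv : (q₁, RVAct.recv a, q₂) ∈ P.E)
    (hsend : (q₁', RVAct.send a, q₂') ∈ P.E) {C : Multiset Q} (hle : {q₁, q₁'} ≤ C) :
    P.Step C (C - {q₁, q₁'} + {q₂, q₂'}) := by
  have h₁ := Multiset.le_iff_count.1 hle q₁
  have h₁' := Multiset.le_iff_count.1 hle q₁'
  refine ⟨a, q₁, q₂, q₁', q₂', hrecv, hsend, ?_, ?_, ?_, rfl⟩ <;>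
    by_cases hq : q₁ = q₁' <;> simp_all <;> omega

variable {P}

theorem Step.card_le {C C' : Multiset Q} (h : P.Step C C') : C.card ≤ C'.card := by
  obtain ⟨a, q₁, q₂, q₁', q₂', -, -, -, -, -, rfl⟩ := h
  simpa using Multiset.card_le_card_tsub_add C {q₁, q₁'}

theorem Reach.card_le {C C' : Multiset Q} (h : P.Reach C C') : C.card ≤ C'.card := by
  induction h with
  | refl => rfl
  | tail _ hstep ih => exact ih.trans hstep.card_le

/-- `Step` only asks `C q₁ + C q₁' ≥ 2`, so a lone agent at `q₁ = q₁'` may play both roles and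
duplicate itself; the size bound rules this out. -/
theorem Step.npStep_toMarking {C C' : Multiset Q} (h : P.Step C C') (hcard : C'.card ≤ C.card) :
    P.NPStep (toMarking C) (toMarking C') := by
  obtain ⟨a, q₁, q₂, q₁', q₂', hrecv, hsend, -, -, -, rfl⟩ := h
  have hle : {q₁', q₁} ≤ C := by
    rw [Multiset.pair_comm]
    exact Multiset.le_of_card_tsub_add_le
      (by simpa only [Multiset.card_add, Multiset.card_pair] using hcard)
  refine Or.inr (Or.inr ⟨a, q₁', q₁, q₂', q₂, hsend, hrecv, ?_, ?_⟩)
  · rwa [← toMarking_pair, toMarking_le_toMarking]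
  · rw [Multiset.pair_comm q₁, Multiset.pair_comm q₂]
    simp only [toMarking_add, toMarking_sub, toMarking_pair]

theorem Reach.npReach_toMarking {C C' : Multiset Q} (h : P.Reach C C')
    (hcard : C'.card ≤ C.card) : P.NPReach (toMarking C) (toMarking C') := by
  induction h with
  | refl => exact .refl
  | tail hreach hstep ih =>
    have := Reach.card_le hreach
    have := Step.card_le hstep
    exact (ih (by omega)).tail (hstep.npStep_toMarking (by omega))

variable (P)

theorem npReach_M0_toMarking_Ci (n : ℕ) : P.NPReach P.M0 (toMarking (P.Ci n)) := by
  induction n with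
  | zero => simpa [Ci, M0] using .refl
  | succ n ih =>
    refine ih.tail (Or.inl ?_)
    simp [Ci, Multiset.replicate_succ, ← Multiset.singleton_add, add_comm, add_left_comm]

theorem npStep_toMarking_Cf (n : ℕ) : P.NPStep (toMarking (P.Cf n)) (P.Mf n) :=
  Or.inr (Or.inl ⟨by simp [Cf], by simp [Cf, Mf]⟩)

end Forward

section Backward

variable {Q A : Type} [Fintype Q] (P : RVProtocol Q A)

def tokens (b : Bool) (M : Q → ℕ) : ℕ := ∑ q with P.isLeader q = b, M q

theorem tokens_add (b : Bool) (M N : Q → ℕ) : P.tokens b (M + N) = P.tokens b M + P.tokens b N :=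
  Finset.sum_add_distrib

theorem tokens_sub (b : Bool) {M N : Q → ℕ} (h : N ≤ M) :
    P.tokens b (M - N) = P.tokens b M - P.tokens b N :=
  Finset.sum_tsub_distrib _ fun q _ => h q

theorem tokens_mono (b : Bool) {M N : Q → ℕ} (h : N ≤ M) : P.tokens b N ≤ P.tokens b M :=
  Finset.sum_le_sum fun q _ => h q

theorem apply_le_tokens (M : Q → ℕ) (q : Q) : M q ≤ P.tokens (P.isLeader q) M :=
  Finset.single_le_sum (fun _ _ => Nat.zero_le _) (by simp)

variable [DecidableEq Q]

@[simp]
theorem tokens_single (b : Bool) (q : Q) (k : ℕ) :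
    P.tokens b (Pi.single q k) = if P.isLeader q = b then k else 0 := by
  simp [tokens, Finset.sum_pi_single']

theorem tokens_rendezvous (b : Bool) {M : Q → ℕ} {u₁ u₂ v₁ v₂ : Q}
    (h₁ : P.isLeader u₁ = P.isLeader v₁) (h₂ : P.isLeader u₂ = P.isLeader v₂)
    (hle : Pi.single u₁ 1 + Pi.single u₂ 1 ≤ M) :
    P.tokens b (M - (Pi.single u₁ 1 + Pi.single u₂ 1) + (Pi.single v₁ 1 + Pi.single v₂ 1)) =
      P.tokens b M := by
  have hmono := P.tokens_mono b hle
  rw [tokens_add, P.tokens_sub b hle, tokens_add, tokens_add]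
  simp only [tokens_add, tokens_single, h₁, h₂] at hmono ⊢
  omega

variable {P}

theorem NPStep.tokens_le {M M' : Q → ℕ} (h : P.NPStep M M') :
    P.tokens false M ≤ P.tokens false M' ∧ P.tokens true M' ≤ P.tokens true M := by
  rcases h with rfl | ⟨hle, rfl⟩ | ⟨a, u₁, u₂, v₁, v₂, hsend, hrecv, hle, rfl⟩
  · simp [tokens_add, P.hqi]
  · exact ⟨by simp [P.tokens_sub _ hle, P.hqfL], P.tokens_mono true tsub_le_self⟩
  · simp only [P.tokens_rendezvous _ (P.hE _ hsend) (P.hE _ hrecv) hle, le_refl, and_self]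

theorem NPReach.tokens_le {M M' : Q → ℕ} (h : P.NPReach M M') :
    P.tokens false M ≤ P.tokens false M' ∧ P.tokens true M' ≤ P.tokens true M := by
  induction h with
  | refl => exact ⟨le_rfl, le_rfl⟩
  | tail _ hstep ih =>
    have := NPStep.tokens_le hstep
    omega

variable (P) in
def completion (n : ℕ) (M : Q → ℕ) : Q → ℕ :=
  M + Pi.single P.qi (n - P.tokens false M) + Pi.single P.qfL (1 - P.tokens true M)

theorem NPStep.reach_completion {n : ℕ} {M M' : Q → ℕ} (h : P.NPStep M M')
    (hM : P.tokens true M ≤ 1) (hM' : P.tokens false M' ≤ n) :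
    P.Reach (ofMarking (P.completion n M)) (ofMarking (P.completion n M')) := by
  rcases h with rfl | ⟨hle, rfl⟩ | ⟨a, u₁, u₂, v₁, v₂, hsend, hrecv, hle, rfl⟩
  · suffices hEq : P.completion n M = P.completion n (M + Pi.single P.qi 1) from hEq ▸ .refl
    have hfalse : P.tokens false (M + Pi.single P.qi 1) = P.tokens false M + 1 := by
      simp [tokens_add, P.hqi]
    have htrue : P.tokens true (M + Pi.single P.qi 1) = P.tokens true M := by
      simp [tokens_add, P.hqi]
    have hwaiting : n - P.tokens false M = 1 + (n - (P.tokens false M + 1)) := by omega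
    rw [completion, completion, hfalse, htrue, hwaiting, Pi.single_add]
    simp only [add_assoc]
  · suffices hEq : P.completion n M = P.completion n (M - Pi.single P.qfL 1) from hEq ▸ .refl
    have hfalse : P.tokens false (M - Pi.single P.qfL 1) = P.tokens false M := by
      simp [P.tokens_sub _ hle, P.hqfL]
    have hleader : P.tokens true M = 1 := by
      have hpos : 1 ≤ M P.qfL := by simpa using hle P.qfL
      have := P.apply_le_tokens M P.qfL
      rw [P.hqfL] at this
      omega
    have htrue : P.tokens true (M - Pi.single P.qfL 1) = 0 := by
      simp [P.tokens_sub _ hle, hleader, P.hqfL]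
    rw [completion, completion, hfalse, htrue, hleader, Nat.sub_self, Pi.single_zero, add_zero,
      add_right_comm, tsub_add_cancel_of_le hle]
  · have hpair : {u₂, u₁} ≤ ofMarking (P.completion n M) := by
      rw [← toMarking_le_toMarking, toMarking_pair, toMarking_ofMarking, add_comm]
      exact hle.trans (le_self_add.trans le_self_add)
    have hC : ofMarking (P.completion n
          (M - (Pi.single u₁ 1 + Pi.single u₂ 1) + (Pi.single v₁ 1 + Pi.single v₂ 1))) =
        ofMarking (P.completion n M) - {u₂, u₁} + {v₂, v₁} := by
      apply toMarking_injective
      simp only [completion, P.tokens_rendezvous _ (P.hE _ hsend) (P.hE _ hrecv) hle,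
        toMarking_add, toMarking_sub, toMarking_pair, toMarking_ofMarking]
      funext q
      have := hle q
      simp only [Pi.add_apply, Pi.sub_apply] at this ⊢
      omega
    rw [hC]
    exact .single (P.step_of_pair_le hrecv hsend hpair)

theorem NPReach.reach_completion {n : ℕ} {M M' : Q → ℕ} (h : P.NPReach M M')
    (hM : P.tokens true M ≤ 1) (hM' : P.tokens false M' ≤ n) :
    P.Reach (ofMarking (P.completion n M)) (ofMarking (P.completion n M')) := by
  induction h with
  | refl => exact .refl
  | tail hreach hstep ih =>
    have := NPReach.tokens_le hreach
    have := NPStep.tokens_le hstep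
    exact (ih (by omega)).trans (hstep.reach_completion (by omega) hM')

variable (P)

theorem completion_M0 (n : ℕ) : P.completion n P.M0 = toMarking (P.Ci n) := by
  simp [completion, M0, Ci, P.hqiL, add_comm]

theorem completion_Mf (n : ℕ) : P.completion n (P.Mf n) = toMarking (P.Cf n) := by
  simp [completion, Mf, Cf, P.hqf]

end Backward

end RVProtocol

theorem rv_reach_iff_petri_reach_general {Q A : Type} [Fintype Q] [DecidableEq Q]
    (P : RVProtocol Q A) (n : ℕ) :
    P.Reach (P.Ci n) (P.Cf n) ↔ P.NPReach P.M0 (P.Mf n) := by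
  constructor
  · intro h
    have hsim := h.npReach_toMarking (by simp [RVProtocol.Ci, RVProtocol.Cf])
    exact ((P.npReach_M0_toMarking_Ci n).trans hsim).tail (P.npStep_toMarking_Cf n)
  · intro h
    have hsim := h.reach_completion (n := n)
      (by simp [RVProtocol.M0, P.hqiL]) (by simp [RVProtocol.Mf, P.hqf])
    rwa [P.completion_M0, P.completion_Mf, RVProtocol.ofMarking_toMarking,
      RVProtocol.ofMarking_toMarking] at hsim

/-- For every `n`, the final configuration `C_f^{(n)}` is reachable from
the initial configuration `C_i^{(n)}` in the rendez-vous protocol `P` iff the marking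
`M_f^{(n)}` is reachable from `M_0` in the associated Petri net `N_P`. -/
theorem rv_reach_iff_petri_reach {Q A : Type} [Fintype Q] [Fintype A] [DecidableEq Q]
    (P : RVProtocol Q A) (n : ℕ) :
    P.Reach (P.Ci n) (P.Cf n) ↔ P.NPReach P.M0 (P.Mf n) :=
  rv_reach_iff_petri_reach_general P n
end

section
/- Let P be a rendez-vous protocol and N_P its associated Petri net. Then there exists B ∈ ℕ such that C_i^(n) →* C_f^(n) in P for all n ≥ B if and only if there exists B ∈ ℕ such that M_f^(n) ∈ Reach(M_0) in N_P for all n ≥ B (i.e., the cut-off problem for P is equivalent to the single-place cut-off problem for (N_P, M_0, p_{q_f})). -/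
/-!
The equivalence holds for each `n` separately. A run of `P` from `C_i^(n)` to `C_f^(n)`
keeps its size, so it is a run of rendez-vous transitions of `N_P` on the corresponding
markings; `t_i` produces the `n` processes first and `t_f^L` removes the leader last.
Conversely, in a run of `N_P` the firings of `t_i` can be moved to the front and those of
`t_f^L` omitted, which leaves a rendez-vous run from `M_0 + k·p_{q_i}` to
`M_f^(n) + j·p_{q_f^L}`, i.e. a run of `P` from `C_i^(k)` to `n` processes in `q_f` and `j`
leaders in `q_f^L`. Edges never change the leader/process colour of a state, so the multiset
of colours is invariant: `j = 1` and `k = n`.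
-/

namespace RVProtocol

variable {Q A : Type} [DecidableEq Q]

def marking (C : Multiset Q) : Q → ℕ := fun q => C.count q

@[simp]
lemma marking_add (C D : Multiset Q) : marking (C + D) = marking C + marking D :=
  funext fun q => Multiset.count_add q C D

@[simp]
lemma marking_sub (C D : Multiset Q) : marking (C - D) = marking C - marking D :=
  funext fun q => Multiset.count_sub q C D

@[simp]
lemma marking_replicate (n : ℕ) (q : Q) : marking (Multiset.replicate n q) = Pi.single q n := by
  funext x
  simp only [marking, Multiset.count_replicate, Pi.single_apply, eq_comm]

@[simp]
lemma marking_singleton (q : Q) : marking {q} = Pi.single q 1 := by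
  rw [← Multiset.replicate_one, marking_replicate]

lemma marking_pair (q q' : Q) : marking {q, q'} = Pi.single q 1 + Pi.single q' 1 := by
  rw [Multiset.insert_eq_cons, ← Multiset.singleton_add, marking_add, marking_singleton,
    marking_singleton]

lemma marking_le_marking {C D : Multiset Q} : marking C ≤ marking D ↔ C ≤ D :=
  Multiset.le_iff_count.symm

lemma marking_injective : Function.Injective (marking : Multiset Q → Q → ℕ) :=
  fun _ _ h => Multiset.ext.mpr (congrFun h)

variable (P : RVProtocol Q A)

/-- The condition `2 ≤ C.count q1 + C.count q1'` of `Step` follows from its two positivity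
conditions, so `Step` also lets a single process in state `q1 = q1'` take both roles, which
makes the configuration grow. Proper steps, with two distinct participants, are exactly the
size-preserving steps. -/
def ProperStep (C C' : Multiset Q) : Prop :=
  ∃ (a : A) (q1 q2 q1' q2' : Q),
    (q1, RVAct.send a, q1') ∈ P.E ∧ (q2, RVAct.recv a, q2') ∈ P.E ∧
    {q1, q2} ≤ C ∧ C' = C - {q1, q2} + {q1', q2'}

def ProperReach : Multiset Q → Multiset Q → Prop := Relation.ReflTransGen P.ProperStep

def NPRendezvousStep (M M' : Q → ℕ) : Prop :=
  ∃ (a : A) (q1 q2 q1' q2' : Q),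
    (q1, RVAct.send a, q1') ∈ P.E ∧ (q2, RVAct.recv a, q2') ∈ P.E ∧
    Pi.single q1 1 + Pi.single q2 1 ≤ M ∧
    M' = M - (Pi.single q1 1 + Pi.single q2 1) + (Pi.single q1' 1 + Pi.single q2' 1)

def NPRendezvousReach : (Q → ℕ) → (Q → ℕ) → Prop :=
  Relation.ReflTransGen P.NPRendezvousStep

variable {P}

lemma card_le_of_step {C C' : Multiset Q} (h : P.Step C C') :
    Multiset.card C ≤ Multiset.card C' := by
  obtain ⟨a, q1, q2, q1', q2', -, -, -, -, -, rfl⟩ := h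
  calc Multiset.card C ≤ Multiset.card (C - {q1, q1'} + {q1, q1'}) :=
        Multiset.card_le_card Multiset.le_sub_add
    _ = Multiset.card (C - {q1, q1'} + {q2, q2'}) := by simp

lemma card_le_of_reach {C C' : Multiset Q} (h : P.Reach C C') :
    Multiset.card C ≤ Multiset.card C' := by
  induction h with
  | refl => exact le_rfl
  | tail _ hstep ih => exact ih.trans (card_le_of_step hstep)

lemma ProperStep.step {C C' : Multiset Q} (h : P.ProperStep C C') : P.Step C C' := by
  obtain ⟨a, q1, q2, q1', q2', hsend, hrecv, hle, rfl⟩ := h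
  have hq1 : 0 < C.count q1 := Multiset.count_pos.mpr (Multiset.mem_of_le hle (by simp))
  have hq2 : 0 < C.count q2 := Multiset.count_pos.mpr (Multiset.mem_of_le hle (by simp))
  exact ⟨a, q2, q2', q1, q1', hrecv, hsend, hq2, hq1, by omega,
    by rw [Multiset.pair_comm q2, Multiset.pair_comm q2']⟩

lemma properStep_of_step {C C' : Multiset Q} (h : P.Step C C')
    (hcard : Multiset.card C' ≤ Multiset.card C) : P.ProperStep C C' := by
  obtain ⟨a, q1, q2, q1', q2', hrecv, hsend, -, -, -, rfl⟩ := h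
  have hC : C = C - {q1', q1} + {q1', q1} := by
    refine Multiset.eq_of_le_of_card_le Multiset.le_sub_add ?_
    simpa [Multiset.pair_comm q1] using hcard
  refine ⟨a, q1', q1, q2', q2, hsend, hrecv, hC ▸ Multiset.le_add_left _ _, ?_⟩
  rw [Multiset.pair_comm q1, Multiset.pair_comm q2]

lemma ProperReach.reach {C C' : Multiset Q} (h : P.ProperReach C C') : P.Reach C C' :=
  Relation.ReflTransGen.mono (fun _ _ => ProperStep.step) C C' h

lemma properReach_of_reach {C C' : Multiset Q} (h : P.Reach C C')
    (hcard : Multiset.card C' ≤ Multiset.card C) : P.ProperReach C C' := by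
  induction h using Relation.ReflTransGen.head_induction_on with
  | refl => exact Relation.ReflTransGen.refl
  | head hstep hrest ih =>
    have h₁ := card_le_of_step hstep
    have h₂ := card_le_of_reach hrest
    exact .head (properStep_of_step hstep (by omega)) (ih (by omega))

lemma ProperStep.map_eq {β : Type*} {f : Q → β} (hf : ∀ e ∈ P.E, f e.1 = f e.2.2)
    {C C' : Multiset Q} (h : P.ProperStep C C') : C'.map f = C.map f := by
  obtain ⟨a, q1, q2, q1', q2', hsend, hrecv, hle, rfl⟩ := h
  have hpair : ({q1', q2'} : Multiset Q).map f = ({q1, q2} : Multiset Q).map f := by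
    simp [hf _ hsend, hf _ hrecv]
  rw [Multiset.map_add, hpair, ← Multiset.map_add, tsub_add_cancel_of_le hle]

lemma ProperReach.map_eq {β : Type*} {f : Q → β} (hf : ∀ e ∈ P.E, f e.1 = f e.2.2)
    {C C' : Multiset Q} (h : P.ProperReach C C') : C'.map f = C.map f := by
  induction h with
  | refl => rfl
  | tail _ hstep ih => rw [hstep.map_eq hf, ih]

lemma ProperStep.npRendezvousStep {C C' : Multiset Q} (h : P.ProperStep C C') :
    P.NPRendezvousStep (marking C) (marking C') := by
  obtain ⟨a, q1, q2, q1', q2', hsend, hrecv, hle, rfl⟩ := h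
  refine ⟨a, q1, q2, q1', q2', hsend, hrecv, ?_, ?_⟩
  · rwa [← marking_pair, marking_le_marking]
  · rw [marking_add, marking_sub, marking_pair, marking_pair]

lemma ProperReach.npRendezvousReach {C C' : Multiset Q} (h : P.ProperReach C C') :
    P.NPRendezvousReach (marking C) (marking C') := by
  induction h with
  | refl => exact Relation.ReflTransGen.refl
  | tail _ hstep ih => exact ih.tail hstep.npRendezvousStep

lemma exists_properStep_of_npRendezvousStep {C : Multiset Q} {M' : Q → ℕ}
    (h : P.NPRendezvousStep (marking C) M') : ∃ C', P.ProperStep C C' ∧ marking C' = M' := by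
  obtain ⟨a, q1, q2, q1', q2', hsend, hrecv, hle, rfl⟩ := h
  rw [← marking_pair, marking_le_marking] at hle
  refine ⟨C - {q1, q2} + {q1', q2'}, ⟨a, q1, q2, q1', q2', hsend, hrecv, hle, rfl⟩, ?_⟩
  rw [marking_add, marking_sub, marking_pair, marking_pair]

lemma exists_properReach_of_npRendezvousReach {C : Multiset Q} {M' : Q → ℕ}
    (h : P.NPRendezvousReach (marking C) M') : ∃ C', P.ProperReach C C' ∧ marking C' = M' := by
  induction h with
  | refl => exact ⟨C, Relation.ReflTransGen.refl, rfl⟩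
  | tail _ hstep ih =>
    obtain ⟨C₁, hreach, rfl⟩ := ih
    obtain ⟨C', hstep', hC'⟩ := exists_properStep_of_npRendezvousStep hstep
    exact ⟨C', hreach.tail hstep', hC'⟩

lemma NPRendezvousStep.add_right {M M' : Q → ℕ} (h : P.NPRendezvousStep M M') (D : Q → ℕ) :
    P.NPRendezvousStep (M + D) (M' + D) := by
  obtain ⟨a, q1, q2, q1', q2', hsend, hrecv, hle, rfl⟩ := h
  refine ⟨a, q1, q2, q1', q2', hsend, hrecv, hle.trans le_self_add, ?_⟩
  funext q
  have hq := hle q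
  simp only [Pi.add_apply, Pi.sub_apply] at hq ⊢
  omega

lemma NPRendezvousReach.add_right {M M' : Q → ℕ} (h : P.NPRendezvousReach M M') (D : Q → ℕ) :
    P.NPRendezvousReach (M + D) (M' + D) := by
  induction h with
  | refl => exact Relation.ReflTransGen.refl
  | tail _ hstep ih => exact ih.tail (hstep.add_right D)

lemma NPRendezvousReach.npReach {M M' : Q → ℕ} (h : P.NPRendezvousReach M M') :
    P.NPReach M M' :=
  Relation.ReflTransGen.mono (fun _ _ h => Or.inr (Or.inr h)) M M' h

lemma exists_npRendezvousReach_of_npReach {M M' : Q → ℕ} (h : P.NPReach M M') :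
    ∃ k j, P.NPRendezvousReach (M + Pi.single P.qi k) (M' + Pi.single P.qfL j) := by
  induction h using Relation.ReflTransGen.head_induction_on with
  | refl => exact ⟨0, 0, by simp only [Pi.single_zero, add_zero]; exact .refl⟩
  | head hstep _ ih =>
    obtain ⟨k, j, hrun⟩ := ih
    rcases hstep with rfl | ⟨hle, rfl⟩ | hrv
    · refine ⟨k + 1, j, ?_⟩
      rwa [Pi.single_add (f := fun _ : Q => ℕ), ← add_assoc, add_right_comm]
    · refine ⟨k, j + 1, ?_⟩
      have := hrun.add_right (Pi.single P.qfL 1)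
      rwa [add_right_comm, tsub_add_cancel_of_le hle, add_assoc, ← Pi.single_add] at this
    · exact ⟨k, j, .head (NPRendezvousStep.add_right hrv _) hrun⟩

lemma marking_ci (n : ℕ) : marking (P.Ci n) = P.M0 + Pi.single P.qi n := by
  simp [Ci, M0, add_comm]

lemma marking_cf (n : ℕ) : marking (P.Cf n) = P.Mf n + Pi.single P.qfL 1 := by
  simp [Cf, Mf]

lemma npReach_m0_add_single_qi (n : ℕ) : P.NPReach P.M0 (P.M0 + Pi.single P.qi n) := by
  induction n with
  | zero => simp only [Pi.single_zero, add_zero]; exact .refl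
  | succ n ih => exact ih.tail (Or.inl (by rw [Pi.single_add, add_assoc]))

lemma npReach_of_reach_ci_cf {n : ℕ} (h : P.Reach (P.Ci n) (P.Cf n)) :
    P.NPReach P.M0 (P.Mf n) := by
  have hrv : P.ProperReach (P.Ci n) (P.Cf n) := properReach_of_reach h (by simp [Ci, Cf])
  have hfire : P.NPStep (marking (P.Cf n)) (P.Mf n) :=
    Or.inr (Or.inl ⟨by simp [marking_cf], by simp [marking_cf]⟩)
  have hstart := npReach_m0_add_single_qi (P := P) n
  rw [← marking_ci] at hstart
  exact (hstart.trans hrv.npRendezvousReach.npReach).tail hfire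

lemma reach_ci_cf_of_npReach {n : ℕ} (h : P.NPReach P.M0 (P.Mf n)) :
    P.Reach (P.Ci n) (P.Cf n) := by
  obtain ⟨k, j, hrun⟩ := exists_npRendezvousReach_of_npReach h
  rw [← marking_ci] at hrun
  obtain ⟨C', hreach, hmarking⟩ := exists_properReach_of_npRendezvousReach hrun
  have hC' : C' = Multiset.replicate n P.qf + Multiset.replicate j P.qfL :=
    marking_injective (by simp [hmarking, Mf])
  have hcol := hreach.map_eq P.hE
  simp only [hC', Ci, Multiset.map_add, Multiset.map_replicate, Multiset.map_singleton,
    P.hqf, P.hqfL, P.hqi, P.hqiL] at hcol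
  have hj : j = 1 := by simpa [Multiset.count_replicate] using congrArg (Multiset.count true) hcol
  have hk : n = k := by
    simpa [Multiset.count_replicate] using congrArg (Multiset.count false) hcol
  subst hj hk hC'
  simpa [Cf] using hreach.reach

lemma reach_ci_cf_iff_npReach (n : ℕ) : P.Reach (P.Ci n) (P.Cf n) ↔ P.NPReach P.M0 (P.Mf n) :=
  ⟨npReach_of_reach_ci_cf, reach_ci_cf_of_npReach⟩

end RVProtocol

theorem rv_cutoff_iff_petri_single_place_cutoff_general {Q A : Type}
    [DecidableEq Q] (P : RVProtocol Q A) :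
    (∃ B : ℕ, ∀ n ≥ B, P.Reach (P.Ci n) (P.Cf n)) ↔
    (∃ B : ℕ, ∀ n ≥ B, P.NPReach P.M0 (P.Mf n)) :=
  exists_congr fun _ => forall₂_congr fun n _ => P.reach_ci_cf_iff_npReach n

/-- The protocol `P` admits a cut-off iff the single-place cut-off
problem for `(N_P, M_0, p_{q_f})` has a positive answer. -/
theorem rv_cutoff_iff_petri_single_place_cutoff {Q A : Type} [Fintype Q] [Fintype A]
    [DecidableEq Q] (P : RVProtocol Q A) :
    (∃ B : ℕ, ∀ n ≥ B, P.Reach (P.Ci n) (P.Cf n)) ↔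
    (∃ B : ℕ, ∀ n ≥ B, P.NPReach P.M0 (P.Mf n)) :=
  rv_cutoff_iff_petri_single_place_cutoff_general P
end

section
/- Let N = (P, T, Pre, Post) be a Petri net, M_0 ∈ ℕ^P a marking and p_f ∈ P a place. Then the set {n ∈ ℕ | the marking M^(n) with M^(n)(p_f) = n and M^(n)(p) = 0 for all p ≠ p_f belongs to Reach(M_0)} is semilinear. Equivalently, the set of markings Reach(M_0) ∩ {M ∈ ℕ^P | M(p) = 0 for all p ∈ P \ {p_f}} is a finite union of sets of the form {vector with b + λ·p tokens in p_f and 0 elsewhere | λ ∈ ℕ}. -/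
/-!
A run of the net is recorded as the word of its letters (marking before a transition, that
transition). By Dickson's and Higman's lemmas these words, paired with the final marking, are
well-quasi-ordered, so among the runs from `M₀` to single-place markings there are finitely many
base runs such that every such run covers one of them: it contains the base run as a scattered
subword, dominates it just before each of its transitions, and ends above it.

For a base run ending in `v • p_f`, the set of `d` such that some run covering it ends in
`(v + d) • p_f` is an additive submonoid of `ℕ`: two covering runs are amalgamated by performing,
at every position, the extra segment of the first run and then that of the second, each carrying
along the surplus of the other. Submonoids of `ℕ` are finitely generated, so the reachable set is
a finite union of translates of finitely generated submonoids of `ℕ`, hence semilinear.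
-/

/-- A Petri net with (finite) sets `P` of places and `T` of transitions:
pre- and post-condition functions assigning to each transition a multiset of places,
represented as a function `P → ℕ`. -/
structure PetriNet (P T : Type) : Type where
  Pre : T → P → ℕ
  Post : T → P → ℕ

namespace PetriNet

variable {P T : Type} (N : PetriNet P T)

/-- The firing relation: `M ⇒ M'` iff some transition `t` satisfies `Pre t ≤ M`
and `M' = M - Pre t + Post t` (pointwise). -/
def Fire (M M' : P → ℕ) : Prop :=
  ∃ t : T, N.Pre t ≤ M ∧ M' = M - N.Pre t + N.Post t

/-- Reachability: reflexive-transitive closure of the firing relation. -/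
def Reach : (P → ℕ) → (P → ℕ) → Prop := Relation.ReflTransGen N.Fire

end PetriNet

/-- A subset of `ℕ` is semilinear if it is a finite union of arithmetic progressions
`{b + λ·p | λ ∈ ℕ}` (with `b, p ∈ ℕ`, `p = 0` allowed). -/
def IsSemilinearNat (S : Set ℕ) : Prop :=
  ∃ F : Finset (ℕ × ℕ), S = ⋃ bp ∈ F, {n : ℕ | ∃ l : ℕ, n = bp.1 + l * bp.2}

open Set Pointwise

theorem IsProperLinearSet.exists_eq_setOf_add_mul {s : Set ℕ} (hs : IsProperLinearSet s) :
    ∃ b p : ℕ, s = {n : ℕ | ∃ l : ℕ, n = b + l * p} := by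
  obtain ⟨a, t, ht, rfl⟩ := isProperLinearSet_iff.1 hs
  have hcard : t.card ≤ 1 := by simpa [CommSemiring.rank_self] using ht.cardinal_le_rank
  obtain ⟨p, hp⟩ := Finset.card_le_one_iff_subset_singleton.1 hcard
  rcases Finset.subset_singleton_iff.1 hp with rfl | rfl
  · exact ⟨a, 0, by ext n; simp [eq_comm]⟩
  · refine ⟨a, p, ?_⟩
    ext n
    simp [mem_vadd_set, AddSubmonoid.mem_closure_singleton, eq_comm]

theorem IsSemilinearSet.isSemilinearNat {s : Set ℕ} (hs : IsSemilinearSet s) :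
    IsSemilinearNat s := by
  classical
  obtain ⟨S, hS, rfl⟩ := isProperSemilinearSet_iff.1 hs.isProperSemilinearSet
  choose b p hbp using fun t ht => (hS t ht).exists_eq_setOf_add_mul
  refine ⟨S.attach.image fun t : {t // t ∈ S} => (b t t.2, p t t.2), ?_⟩
  ext n
  simp only [mem_sUnion, Finset.mem_coe, Finset.mem_image, Finset.mem_attach, true_and,
    mem_iUnion, exists_prop, Subtype.exists]
  constructor
  · rintro ⟨t, ht, hn⟩
    rw [hbp t ht] at hn
    exact ⟨_, ⟨t, ht, rfl⟩, hn⟩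
  · rintro ⟨_, ⟨t, ht, rfl⟩, hn⟩
    exact ⟨t, ht, by rw [hbp t ht]; exact hn⟩

theorem WellQuasiOrdered.exists_finset_forall_exists_rel {α : Type*} {r : α → α → Prop}
    (hr : WellQuasiOrdered r) (s : Set α) :
    ∃ B : Finset α, ↑B ⊆ s ∧ ∀ x ∈ s, ∃ b ∈ B, r b x := by
  by_contra! hs
  obtain ⟨f, -, hf⟩ := exists_seq_of_forall_finset_exists (· ∈ s) (fun x y => ¬ r x y) hs
  obtain ⟨m, n, hmn, hr⟩ := hr f
  exact hf m n hmn hr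

theorem add_tsub_comm_of_le {α : Type*} [AddCommSemigroup α] [PartialOrder α] [ExistsAddOfLE α]
    [AddLeftMono α] [Sub α] [OrderedSub α] [AddLeftReflectLE α] {a b c : α} (hb : a ≤ b)
    (hc : a ≤ c) : b + (c - a) = c + (b - a) := by
  rw [← add_tsub_assoc_of_le hc, ← add_tsub_assoc_of_le hb, add_comm]

namespace PetriNet

variable {P T : Type} (N : PetriNet P T)

def step (t : T) (M : P → ℕ) : P → ℕ := M - N.Pre t + N.Post t

variable {N}

theorem fire_step {t : T} {M : P → ℕ} (h : N.Pre t ≤ M) : N.Fire M (N.step t M) :=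
  ⟨t, h, rfl⟩

theorem step_add {t : T} {M : P → ℕ} (h : N.Pre t ≤ M) (Z : P → ℕ) :
    N.step t (M + Z) = N.step t M + Z := by
  funext p
  have : N.Pre t p ≤ M p := h p
  simp only [step, Pi.add_apply, Pi.sub_apply]
  omega

theorem step_mono (t : T) {A B : P → ℕ} (h : A ≤ B) : N.step t A ≤ N.step t B := fun p => by
  have : A p ≤ B p := h p
  simp only [step, Pi.add_apply, Pi.sub_apply]
  omega

theorem step_add_tsub {t : T} {A B₁ B₂ : P → ℕ} (hA : N.Pre t ≤ A) (h₁ : A ≤ B₁) (h₂ : A ≤ B₂) :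
    N.step t (B₁ + (B₂ - A)) = N.step t B₁ + (N.step t B₂ - N.step t A) := by
  funext p
  have : N.Pre t p ≤ A p := hA p
  have : A p ≤ B₁ p := h₁ p
  have : A p ≤ B₂ p := h₂ p
  simp only [step, Pi.add_apply, Pi.sub_apply]
  omega

theorem Reach.add_right {A B : P → ℕ} (h : N.Reach A B) (Z : P → ℕ) :
    N.Reach (A + Z) (B + Z) := by
  induction h with
  | refl => exact .refl
  | tail _ hBC ih =>
    obtain ⟨t, hpre, rfl⟩ := hBC
    exact ih.tail ⟨t, hpre.trans le_self_add, (step_add hpre Z).symm⟩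

theorem Reach.add_tsub {A B₁ B₁' B₂ B₂' : P → ℕ} (h₁ : N.Reach B₁ B₁') (h₂ : N.Reach B₂ B₂')
    (hA₁ : A ≤ B₁') (hA₂ : A ≤ B₂) (hA₂' : A ≤ B₂') :
    N.Reach (B₁ + (B₂ - A)) (B₁' + (B₂' - A)) := by
  have h₁' := h₁.add_right (B₂ - A)
  have h₂' := h₂.add_right (B₁' - A)
  rw [add_tsub_comm_of_le hA₁ hA₂] at h₁'
  rw [add_tsub_comm_of_le hA₂' hA₁] at h₂'
  exact h₁'.trans h₂'

variable (N) in
inductive Trace : (P → ℕ) → List ((P → ℕ) × T) → (P → ℕ) → Prop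
  | nil (M : P → ℕ) : Trace M [] M
  | cons {M F : P → ℕ} {t : T} {l : List ((P → ℕ) × T)} :
      N.Pre t ≤ M → Trace (N.step t M) l F → Trace M ((M, t) :: l) F

theorem Trace.reach {A F : P → ℕ} {l : List ((P → ℕ) × T)} (h : N.Trace A l F) :
    N.Reach A F := by
  induction h with
  | nil => exact .refl
  | cons hpre _ ih => exact .head (fire_step hpre) ih

theorem Reach.exists_trace {A F : P → ℕ} (h : N.Reach A F) : ∃ l, N.Trace A l F := by
  induction h using Relation.ReflTransGen.head_induction_on with
  | refl => exact ⟨[], .nil F⟩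
  | head hAB _ ih =>
    obtain ⟨t, hpre, rfl⟩ := hAB
    obtain ⟨l, hl⟩ := ih
    exact ⟨_, .cons hpre hl⟩

variable (N) in
/-- `N.Covers A w F B G`: the run of `w` from `A` to `F` is covered by a run from `B` to `G`,
i.e. the latter contains `w` as a scattered subword, dominates the former just before each
transition of `w`, and ends above `F`. -/
def Covers : (P → ℕ) → List T → (P → ℕ) → (P → ℕ) → (P → ℕ) → Prop
  | A, [], F, B, G => A = F ∧ N.Reach B G ∧ F ≤ G
  | A, t :: w, F, B, G => N.Pre t ≤ A ∧
      ∃ B', N.Reach B B' ∧ A ≤ B' ∧ Covers (N.step t A) w F (N.step t B') G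

theorem Covers.reach : ∀ {w : List T} {A F B G : P → ℕ}, N.Covers A w F B G → N.Reach B G
  | [], _, _, _, _, ⟨_, h, _⟩ => h
  | _ :: _, _, _, _, _, ⟨hpre, _, h, hA, hw⟩ =>
    h.trans (.head (fire_step (hpre.trans hA)) hw.reach)

theorem Covers.le : ∀ {w : List T} {A F B G : P → ℕ}, N.Covers A w F B G → F ≤ G
  | [], _, _, _, _, ⟨_, _, h⟩ => h
  | _ :: _, _, _, _, _, ⟨_, _, _, _, hw⟩ => hw.le

theorem Covers.of_reach {w : List T} {A F B B' G : P → ℕ} (h : N.Reach B B')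
    (hw : N.Covers A w F B' G) : N.Covers A w F B G := by
  cases w with
  | nil => exact ⟨hw.1, h.trans hw.2.1, hw.2.2⟩
  | cons t w =>
    obtain ⟨hpre, B'', h', hw⟩ := hw
    exact ⟨hpre, B'', h.trans h', hw⟩

theorem Trace.covers_self {A F : P → ℕ} {l : List ((P → ℕ) × T)} (h : N.Trace A l F) :
    N.Covers A (l.map Prod.snd) F A F := by
  induction h with
  | nil M => exact ⟨rfl, .refl, le_rfl⟩
  | cons hpre _ ih => exact ⟨hpre, _, .refl, le_rfl, ih⟩

theorem Covers.amalgamate : ∀ {w : List T} {A F B₁ G₁ B₂ G₂ : P → ℕ},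
    N.Covers A w F B₁ G₁ → N.Covers A w F B₂ G₂ → A ≤ B₂ →
    N.Covers A w F (B₁ + (B₂ - A)) (G₁ + (G₂ - F))
  | [], _, _, _, _, _, _, ⟨rfl, h₁, hF₁⟩, ⟨_, h₂, hF₂⟩, hA₂ =>
    ⟨rfl, h₁.add_tsub h₂ hF₁ hA₂ hF₂, hF₁.trans le_self_add⟩
  | _ :: _, _, _, _, _, _, _, ⟨hpre, B₁', h₁, hA₁, hw₁⟩, ⟨_, B₂', h₂, hA₂', hw₂⟩, hA₂ =>
    ⟨hpre, B₁' + (B₂' - _), h₁.add_tsub h₂ hA₁ hA₂ hA₂', hA₁.trans le_self_add, by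
      rw [step_add_tsub hpre hA₁ hA₂']
      exact hw₁.amalgamate hw₂ (step_mono _ hA₂')⟩

def LetterLE (a b : (P → ℕ) × T) : Prop := a.1 ≤ b.1 ∧ a.2 = b.2

instance : IsPreorder ((P → ℕ) × T) LetterLE where
  refl _ := ⟨le_rfl, rfl⟩
  trans _ _ _ h₁ h₂ := ⟨h₁.1.trans h₂.1, h₁.2.trans h₂.2⟩

theorem wellQuasiOrdered_le_and_sublistForall₂ [Finite P] [Finite T] :
    WellQuasiOrdered fun x y : (P → ℕ) × List ((P → ℕ) × T) =>
      x.1 ≤ y.1 ∧ List.SublistForall₂ LetterLE x.2 y.2 := by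
  have hletter : WellQuasiOrdered (LetterLE (P := P) (T := T)) :=
    wellQuasiOrdered_le.prod (Finite.wellQuasiOrdered _)
  have hword :=
    (Set.partiallyWellOrderedOn_univ_iff.2 hletter).partiallyWellOrderedOn_sublistForall₂
  simp only [Set.mem_univ, implies_true, Set.ofPred_true] at hword
  exact wellQuasiOrdered_le.prod (Set.partiallyWellOrderedOn_univ_iff.1 hword)

theorem Trace.covers_of_sublistForall₂ {l l' : List ((P → ℕ) × T)}
    (hl : List.SublistForall₂ LetterLE l l') {A F B G : P → ℕ} (h : N.Trace A l F)
    (h' : N.Trace B l' G) (hFG : F ≤ G) : N.Covers A (l.map Prod.snd) F B G := by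
  induction hl generalizing A B with
  | nil =>
    cases h
    exact ⟨rfl, h'.reach, hFG⟩
  | cons hle _ ih =>
    cases h with | cons hpre h =>
    cases h' with | cons _ h' =>
    obtain ⟨hAB, rfl⟩ : A ≤ B ∧ _ = _ := hle
    exact ⟨hpre, _, .refl, hAB, ih h h'⟩
  | cons_right _ ih =>
    cases h' with | cons hpre h' =>
    exact .of_reach (.single (fire_step hpre)) (ih h h')

theorem exists_finset_reach_iff_covers [Finite P] [Finite T] (M₀ : P → ℕ)
    (S : Set (P → ℕ)) :
    ∃ B : Finset ((P → ℕ) × List ((P → ℕ) × T)),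
      (∀ b ∈ B, b.1 ∈ S ∧ N.Trace M₀ b.2 b.1) ∧
      ∀ M ∈ S, N.Reach M₀ M ↔ ∃ b ∈ B, N.Covers M₀ (b.2.map Prod.snd) b.1 M₀ M := by
  obtain ⟨B, hBS, hB⟩ := wellQuasiOrdered_le_and_sublistForall₂.exists_finset_forall_exists_rel
    {x | x.1 ∈ S ∧ N.Trace M₀ x.2 x.1}
  refine ⟨B, hBS, fun M hM => ⟨fun h => ?_, fun ⟨_, _, hb⟩ => hb.reach⟩⟩
  obtain ⟨l, hl⟩ := h.exists_trace
  obtain ⟨b, hb, hFM, hbl⟩ := hB (M, l) ⟨hM, hl⟩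
  exact ⟨b, hb, (hBS hb).2.covers_of_sublistForall₂ hbl hl hFM⟩

theorem isSemilinearSet_setOf_covers_single [DecidableEq P] {M₀ : P → ℕ} {w : List T} {pf : P}
    {v : ℕ} (hv : N.Covers M₀ w (Pi.single pf v) M₀ (Pi.single pf v)) :
    IsSemilinearSet {n | N.Covers M₀ w (Pi.single pf v) M₀ (Pi.single pf n)} := by
  let D : AddSubmonoid ℕ :=
    { carrier := {d | N.Covers M₀ w (Pi.single pf v) M₀ (Pi.single pf (v + d))}
      zero_mem' := hv
      add_mem' := fun {d₁ d₂} h₁ h₂ => by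
        have hsum : Pi.single pf (v + d₁) + (Pi.single pf (v + d₂) - Pi.single pf v) =
            (Pi.single pf (v + (d₁ + d₂)) : P → ℕ) := by
          ext p
          rcases eq_or_ne p pf with rfl | hp <;> simp [*]
          omega
        simpa [hsum] using h₁.amalgamate h₂ le_rfl }
  convert (IsSemilinearSet.of_fg (Nat.addSubmonoid_fg D)).vadd v
  ext n
  refine ⟨fun hn => ?_, fun ⟨d, hd, hdn⟩ => hdn ▸ hd⟩
  have hvn : v ≤ n := by simpa using hn.le pf
  refine ⟨n - v, ?_, add_tsub_cancel_of_le hvn⟩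
  show N.Covers _ _ _ _ _
  rwa [add_tsub_cancel_of_le hvn]

end PetriNet

/-- For a Petri net `N`, an initial marking `M₀` and a place `p_f`,
the set of `n ∈ ℕ` such that the marking with `n` tokens in `p_f` and none elsewhere
is reachable from `M₀` is semilinear. -/
theorem petri_single_place_reach_semilinear {P T : Type} [Fintype P] [Fintype T]
    [DecidableEq P] (N : PetriNet P T) (M0 : P → ℕ) (pf : P) :
    IsSemilinearNat {n : ℕ | N.Reach M0 (Pi.single pf n)} := by
  obtain ⟨B, hBS, hB⟩ := N.exists_finset_reach_iff_covers M0 (Set.range (Pi.single pf))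
  have hcover : {n : ℕ | N.Reach M0 (Pi.single pf n)} =
      ⋃ b ∈ B, {n | N.Covers M0 (b.2.map Prod.snd) b.1 M0 (Pi.single pf n)} := by
    ext n
    simpa using hB _ ⟨n, rfl⟩
  rw [hcover]
  refine (IsSemilinearSet.biUnion_finset fun b hb => ?_).isSemilinearNat
  obtain ⟨⟨v, hv⟩, hb⟩ := hBS b hb
  rw [← hv] at hb ⊢
  exact PetriNet.isSemilinearSet_setOf_covers_single hb.covers_self
end

section
/- Let P be a symmetric rendez-vous protocol in which, for every q ∈ Q_P, the underlying graph has a path from q_i to q and a path from q to q_f. Let C be a configuration such that C_i^(|C|−1) →* C. Then for every configuration C' such that C(q) ≤ C'(q) for all q ∈ Q and C(q) ≡ C'(q) (mod 2) for all q ∈ Q, we have C_i^(|C'|−1) →* C'. -/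
namespace RVProtocol

variable {Q A : Type} (P : RVProtocol Q A)

/-- A rendez-vous protocol is symmetric when `(q,!a,q') ∈ E` iff `(q,?a,q') ∈ E`;
such an edge is then written `(q,a,q')`. -/
def IsSymmetric : Prop :=
  ∀ (q : Q) (a : A) (q' : Q), (q, RVAct.send a, q') ∈ P.E ↔ (q, RVAct.recv a, q') ∈ P.E

/-- The edge relation of the underlying graph of the protocol: there is an edge from
`q` to `q'` whenever `(q,a,q') ∈ E` for some letter `a`. -/
def Adj (q q' : Q) : Prop := ∃ a : A, (q, RVAct.send a, q') ∈ P.E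

/-- Every process state is on a path from `q_i` to `q_f` in the underlying graph. -/
def Connected : Prop :=
  ∀ q : Q, P.isLeader q = false →
    Relation.ReflTransGen P.Adj P.qi q ∧ Relation.ReflTransGen P.Adj q P.qf

end RVProtocol

section Aux

namespace RVProtocol
variable {Q A : Type} [DecidableEq Q] (P : RVProtocol Q A)

lemma count_pair' (a q1 q2 : Q) :
    ({q1, q2} : Multiset Q).count a = (if a = q1 then 1 else 0) + (if a = q2 then 1 else 0) := by
  simp [Multiset.insert_eq_cons, Multiset.count_cons, Multiset.count_singleton]
  ring

lemma step_card_le {b c : Multiset Q} (h : P.Step b c) : b.card ≤ c.card := by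
  obtain ⟨a, q1, q2, q1', q2', _, _, h3, h4, h5, h6⟩ := h
  subst h6
  have h1 : b ≤ b - ({q1, q1'} : Multiset Q) + {q1, q1'} := le_tsub_add
  have h2 := Multiset.card_le_card h1
  simp only [Multiset.card_add] at h2 ⊢
  have : ({q1, q1'} : Multiset Q).card = 2 := rfl
  have : ({q2, q2'} : Multiset Q).card = 2 := rfl
  omega

lemma reach_card_le {b c : Multiset Q} (h : P.Reach b c) : b.card ≤ c.card := by
  induction h with
  | refl => exact le_refl _
  | tail _ hs ih => exact ih.trans (P.step_card_le hs)

/-- a card-preserving step lifts along addition of a context. -/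
lemma step_add {b c : Multiset Q} (h : P.Step b c) (hcard : c.card ≤ b.card)
    (X : Multiset Q) : P.Step (b + X) (c + X) := by
  obtain ⟨a, q1, q2, q1', q2', h1, h2, h3, h4, h5, h6⟩ := h
  have hsub : ({q1, q1'} : Multiset Q) ≤ b := by
    by_contra hns
    rw [Multiset.le_iff_count] at hns
    push_neg at hns
    obtain ⟨q, hq⟩ := hns
    rw [count_pair'] at hq
    rcases eq_or_ne q q1 with rfl | hne1
    case inr =>
      rcases eq_or_ne q q1' with rfl | hne2
      · rw [if_neg hne1, if_pos rfl] at hq; omega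
      · rw [if_neg hne1, if_neg hne2] at hq; omega
    rcases eq_or_ne q q1' with he | hne2
    case inr => rw [if_pos rfl, if_neg hne2] at hq; omega
    subst he
    -- so q1 = q1' = q and count b q = 1
    have hcount : b.count q = 1 := by simp at hq; omega
    -- then c has card b.card + 1
    have hbs : b - {q, q} = b - {q} := by
      ext x
      rw [Multiset.count_sub, Multiset.count_sub, count_pair', Multiset.count_singleton]
      rcases eq_or_ne x q with rfl | hx
      · simp [hcount]
      · simp [hx]
    have hcard2 : c.card = b.card + 1 := by
      subst h6
      rw [hbs]
      have h1le : ({q} : Multiset Q) ≤ b := by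
        rw [Multiset.le_iff_count]; intro x
        rcases eq_or_ne x q with rfl | hx
        · simp [hcount]
        · simp [hx]
      rw [Multiset.card_add, Multiset.card_sub h1le]
      have hpc2 : ({q2, q2'} : Multiset Q).card = 2 := rfl
      have hb1 : 1 ≤ b.card := by
        have := Multiset.count_le_card q b
        omega
      simp only [Multiset.card_singleton]
      omega
    omega
  refine ⟨a, q1, q2, q1', q2', h1, h2, ?_, ?_, ?_, ?_⟩
  · simp only [Multiset.count_add]; omega
  · simp only [Multiset.count_add]; omega
  · simp only [Multiset.count_add]; omega
  · subst h6
    ext x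
    simp only [Multiset.count_add, Multiset.count_sub]
    have := Multiset.le_iff_count.1 hsub x
    omega

lemma reach_add {b c : Multiset Q} (h : P.Reach b c) (hcard : c.card ≤ b.card)
    (X : Multiset Q) : P.Reach (b + X) (c + X) := by
  induction h with
  | refl => exact Relation.ReflTransGen.refl
  | @tail m c hbm hs ih =>
    have h1 := P.reach_card_le hbm
    have h2 := P.step_card_le hs
    exact (ih (by omega)).tail (P.step_add hs (by omega) X)

lemma step_pair (hsym : P.IsSymmetric) {q q' : Q} (h : P.Adj q q') (X : Multiset Q) :
    P.Step (X + {q, q}) (X + {q', q'}) := by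
  obtain ⟨a, ha⟩ := h
  refine ⟨a, q, q', q, q', (hsym q a q').1 ha, ha, ?_, ?_, ?_, ?_⟩
  · simp [Multiset.count_add, count_pair']
  · simp [Multiset.count_add, count_pair']
  · simp [Multiset.count_add, count_pair']; omega
  · ext x
    simp only [Multiset.count_add, Multiset.count_sub, count_pair']
    split_ifs <;> omega

lemma reach_pair (hsym : P.IsSymmetric) {q q' : Q} (h : Relation.ReflTransGen P.Adj q q')
    (X : Multiset Q) : P.Reach (X + {q, q}) (X + {q', q'}) := by
  induction h with
  | refl => exact Relation.ReflTransGen.refl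
  | tail _ hs ih => exact ih.tail (P.step_pair hsym hs X)

lemma fill (hsym : P.IsSymmetric) (hconn : P.Connected) :
    ∀ n (D : Multiset Q), D.card = n → (∀ q, 2 ∣ D.count q) →
      (∀ q ∈ D, P.isLeader q = false) → ∀ X : Multiset Q,
      P.Reach (X + Multiset.replicate n P.qi) (X + D) := by
  intro n
  induction n using Nat.strong_induction_on with
  | _ n ih =>
    intro D hcard heven hproc X
    rcases eq_or_ne D 0 with rfl | hne
    · simp at hcard; subst hcard; simp; exact Relation.ReflTransGen.refl
    · obtain ⟨q, hq⟩ := Multiset.exists_mem_of_ne_zero hne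
      have hq2 : 2 ≤ D.count q := by
        have := heven q
        have := Multiset.one_le_count_iff_mem.2 hq
        omega
      have hsub : ({q, q} : Multiset Q) ≤ D := by
        rw [Multiset.le_iff_count]
        intro x
        rw [count_pair']
        rcases eq_or_ne x q with rfl | hx
        · simp; omega
        · simp [hx]
      set D₂ := D - {q, q} with hD₂
      have hDeq : D₂ + {q, q} = D := tsub_add_cancel_of_le hsub
      have hpc : ({q, q} : Multiset Q).card = 2 := rfl
      have hn2 : 2 ≤ n := by
        rw [← hcard, ← hDeq]; simp [hpc]
      have hcard2 : D₂.card = n - 2 := by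
        have : D₂.card + 2 = n := by rw [← hcard, ← hDeq]; simp [hpc]
        omega
      have heven2 : ∀ x, 2 ∣ D₂.count x := by
        intro x
        have h1 := heven x
        have h2 : D₂.count x + ({q,q} : Multiset Q).count x = D.count x := by
          conv_rhs => rw [← hDeq]
          rw [Multiset.count_add]
        rw [count_pair'] at h2
        rcases eq_or_ne x q with rfl | hx
        · simp at h2; omega
        · simp [hx] at h2; omega
      have hproc2 : ∀ x ∈ D₂, P.isLeader x = false := fun x hx =>
        hproc x (Multiset.mem_of_le (tsub_le_self) hx)
      have hrep2 : (Multiset.replicate 2 P.qi : Multiset Q) = {P.qi, P.qi} := rfl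
      have hrep : Multiset.replicate n P.qi
          = Multiset.replicate (n-2) P.qi + ({P.qi, P.qi} : Multiset Q) := by
        rw [← hrep2, ← Multiset.replicate_add]; congr 1; omega
      -- X + replicate n qi = (X + {qi,qi}) + replicate (n-2) qi →* (X + {qi,qi}) + D₂
      have step1 : P.Reach ((X + {P.qi, P.qi}) + Multiset.replicate (n-2) P.qi)
          ((X + {P.qi, P.qi}) + D₂) := by
        exact ih (n-2) (by omega) D₂ hcard2 heven2 hproc2 _
      have step2 : P.Reach ((X + D₂) + {P.qi, P.qi}) ((X + D₂) + {q, q}) :=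
        P.reach_pair hsym (hconn q (hproc q hq)).1 _
      have e1 : X + Multiset.replicate n P.qi
          = (X + {P.qi, P.qi}) + Multiset.replicate (n-2) P.qi := by
        rw [hrep]; abel
      have e2 : (X + {P.qi, P.qi}) + D₂ = (X + D₂) + {P.qi, P.qi} := by
        abel
      have e3 : (X + D₂) + {q, q} = X + D := by
        rw [add_assoc, hDeq]
      rw [e1, ← e3]
      exact Relation.ReflTransGen.trans (e2 ▸ step1) step2

end RVProtocol
end Aux

/-- In a symmetric rendez-vous protocol where every process state lies on
a path from `q_i` to `q_f`, if `C` is a configuration reachable from the initial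
configuration `C_i^{(|C|-1)}`, then every configuration `C'` with `C(q) ≤ C'(q)` and
`C(q) ≡ C'(q) (mod 2)` for all `q ∈ Q` is reachable from `C_i^{(|C'|-1)}`. -/
theorem symmetric_pump_up {Q A : Type} [Fintype Q] [Fintype A] [DecidableEq Q]
    (P : RVProtocol Q A) (hsym : P.IsSymmetric) (hconn : P.Connected)
    (C : Multiset Q) (hC : P.IsConfig C) (hreach : P.Reach (P.Ci (C.card - 1)) C)
    (C' : Multiset Q) (hC' : P.IsConfig C')
    (hle : ∀ q : Q, C.count q ≤ C'.count q)
    (hpar : ∀ q : Q, C.count q % 2 = C'.count q % 2) :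
    P.Reach (P.Ci (C'.card - 1)) C' := by
  classical
  have hCC' : C ≤ C' := Multiset.le_iff_count.2 hle
  set D := C' - C with hD
  have hDadd : C + D = C' := add_tsub_cancel_of_le hCC'
  have hDcount : ∀ q, D.count q = C'.count q - C.count q := fun q => by
    rw [hD, Multiset.count_sub]
  have heven : ∀ q, 2 ∣ D.count q := by
    intro q; rw [hDcount]
    have := hpar q; have := hle q; omega
  have hfil : C.filter (fun q => P.isLeader q = true)
      = C'.filter (fun q => P.isLeader q = true) := by
    apply Multiset.eq_of_le_of_card_le (Multiset.filter_le_filter _ hCC')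
    rw [hC', hC]
  have hleadcount : ∀ q, P.isLeader q = true → C.count q = C'.count q := by
    intro q hq
    have h1 := congrArg (Multiset.count q) hfil
    rwa [Multiset.count_filter, Multiset.count_filter, if_pos hq, if_pos hq] at h1
  have hproc : ∀ q ∈ D, P.isLeader q = false := by
    intro q hq
    by_contra h
    have ht : P.isLeader q = true := by
      cases hb : P.isLeader q
      · exact absurd hb h
      · rfl
    have h1 := hleadcount q ht
    have h2 := Multiset.one_le_count_iff_mem.2 hq
    rw [hDcount q] at h2
    omega
  have hcardC : 1 ≤ C.card := by
    have := Multiset.card_le_card (Multiset.filter_le (fun q => P.isLeader q = true) C)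
    rw [hC] at this
    exact this
  have hk : C.card + D.card = C'.card := by
    rw [← hDadd, Multiset.card_add]
  set k := D.card with hkdef
  have hCi : P.Ci (C'.card - 1) = P.Ci (C.card - 1) + Multiset.replicate k P.qi := by
    unfold RVProtocol.Ci
    have he : C'.card - 1 = (C.card - 1) + k := by omega
    rw [he, Multiset.replicate_add]
    abel
  have hcardCi : (P.Ci (C.card - 1)).card = C.card := by
    unfold RVProtocol.Ci
    simp only [Multiset.card_add, Multiset.card_replicate, Multiset.card_singleton]
    omega
  have h1 : P.Reach (P.Ci (C.card-1) + Multiset.replicate k P.qi)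
      (C + Multiset.replicate k P.qi) :=
    P.reach_add hreach (le_of_eq hcardCi.symm) _
  have h2 : P.Reach (C + Multiset.replicate k P.qi) (C + D) := by
    have := P.fill hsym hconn k D rfl heven hproc C
    exact this
  rw [hCi, ← hDadd]
  exact h1.trans h2
end

section
/- Let P be a symmetric rendez-vous protocol in which, for every q ∈ Q_P, the underlying graph has a path from q_i to q and a path from q to q_f. Let C be a configuration such that C_i^(|C|−1) →* C. Then for every configuration C' such that |C'| = |C|, C'(q) ≤ C(q) for all q ∈ Q \ {q_f}, and C(q) ≡ C'(q) (mod 2) for all q ∈ Q, we have C_i^(|C'|−1) →* C'. -/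
section AuxPump

set_option linter.unusedSectionVars false

variable {Q A : Type} [DecidableEq Q]

private lemma count_pair' (r x : Q) : ({r, r} : Multiset Q).count x = if x = r then 2 else 0 := by
  simp [Multiset.insert_eq_cons, Multiset.count_cons, Multiset.count_singleton]
  split <;> simp

private lemma pair_le' {C : Multiset Q} {r : Q} (h : 2 ≤ C.count r) :
    ({r, r} : Multiset Q) ≤ C := by
  rw [Multiset.le_iff_count]
  intro x
  rw [count_pair']
  split
  · next hx => subst hx; omega
  · omega

private lemma card_pair' (r : Q) : ({r, r} : Multiset Q).card = 2 := by
  simp [Multiset.insert_eq_cons]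

private lemma card_eq_sum_count' [Fintype Q] (s : Multiset Q) :
    s.card = ∑ q : Q, s.count q := by
  rw [← Multiset.toFinset_sum_count_eq]
  refine Finset.sum_subset (Finset.subset_univ _) ?_
  intro x _ hx
  simpa [Multiset.count_eq_zero] using fun h => hx (Multiset.mem_toFinset.2 h)

private lemma movePair' (P : RVProtocol Q A) (hsym : P.IsSymmetric) {r t : Q}
    (hpath : Relation.ReflTransGen P.Adj r t) :
    ∀ C : Multiset Q, 2 ≤ C.count r → P.Reach C (C - {r, r} + {t, t}) := by
  induction hpath using Relation.ReflTransGen.head_induction_on with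
  | refl =>
    intro C hc
    rw [tsub_add_cancel_of_le (pair_le' hc)]
    exact Relation.ReflTransGen.refl
  | @head a c hadj hpath ih =>
    intro C hc
    obtain ⟨l, hl⟩ := hadj
    have hstep : P.Step C (C - {a, a} + {c, c}) :=
      ⟨l, a, c, a, c, (hsym a l c).1 hl, hl, by omega, by omega, by omega, rfl⟩
    have h2 : 2 ≤ (C - {a, a} + {c, c}).count c := by
      rw [Multiset.count_add, count_pair']
      simp
    have := ih (C - {a, a} + {c, c}) h2
    rw [show C - {a, a} + {c, c} - {c, c} = C - {a, a} from add_tsub_cancel_right _ _] at this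
    exact Relation.ReflTransGen.head hstep this

private lemma leader_count_le_one (P : RVProtocol Q A) {C : Multiset Q} (hC : P.IsConfig C)
    {q : Q} (hq : P.isLeader q = true) : C.count q ≤ 1 := by
  have h1 := Multiset.count_le_card q (C.filter (fun x => P.isLeader x = true))
  rw [Multiset.count_filter] at h1
  rw [hC] at h1
  simpa [hq] using h1

private lemma pump_aux [Fintype Q] (P : RVProtocol Q A) (hsym : P.IsSymmetric)
    (hconn : P.Connected) :
    ∀ n : ℕ, ∀ C : Multiset Q, P.IsConfig C → P.Reach (P.Ci (C.card - 1)) C →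
      ∀ C' : Multiset Q, P.IsConfig C' → C'.card = C.card →
      (∀ q : Q, q ≠ P.qf → C'.count q ≤ C.count q) →
      (∀ q : Q, C.count q % 2 = C'.count q % 2) →
      (∑ q ∈ Finset.univ.erase P.qf, (C.count q - C'.count q)) = n →
      P.Reach (P.Ci (C'.card - 1)) C' := by
  intro n
  induction n using Nat.strong_induction_on with
  | _ n ih =>
  intro C hC hreach C' hC' hcard hle hpar hsum
  by_cases hn : n = 0
  · -- all counts agree off q_f, and cards agree, so C' = C
    subst hn
    have hz : ∀ q ∈ Finset.univ.erase P.qf, C.count q - C'.count q = 0 :=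
      Finset.sum_eq_zero_iff.1 hsum
    have heq : ∀ q : Q, q ≠ P.qf → C'.count q = C.count q := by
      intro q hq
      have h1 := hz q (Finset.mem_erase.2 ⟨hq, Finset.mem_univ q⟩)
      have h2 := hle q hq
      omega
    have h1 : C.card = C.count P.qf + ∑ q ∈ Finset.univ.erase P.qf, C.count q := by
      rw [card_eq_sum_count']
      exact (Finset.add_sum_erase _ _ (Finset.mem_univ P.qf)).symm
    have h2 : C'.card = C'.count P.qf + ∑ q ∈ Finset.univ.erase P.qf, C'.count q := by
      rw [card_eq_sum_count']
      exact (Finset.add_sum_erase _ _ (Finset.mem_univ P.qf)).symm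
    have h3 : ∑ q ∈ Finset.univ.erase P.qf, C'.count q
        = ∑ q ∈ Finset.univ.erase P.qf, C.count q :=
      Finset.sum_congr rfl fun q hq => heq q (Finset.ne_of_mem_erase hq)
    have hfeq : C'.count P.qf = C.count P.qf := by omega
    have : C' = C := by
      ext x
      rcases eq_or_ne x P.qf with rfl | hx
      · exact hfeq
      · exact heq x hx
    rw [this]
    exact hreach
  · -- find a state where counts differ, and pump a pair of processes down to q_f
    obtain ⟨q, hq, hqne0⟩ :
        ∃ q ∈ Finset.univ.erase P.qf, C.count q - C'.count q ≠ 0 := by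
      apply Finset.exists_ne_zero_of_sum_ne_zero
      rw [hsum]; exact hn
    have hqf : q ≠ P.qf := Finset.ne_of_mem_erase hq
    have hlt : C'.count q < C.count q := by
      have := hle q hqf
      omega
    have hparq := hpar q
    have h2q : 2 ≤ C.count q := by omega
    have hLead : P.isLeader q = false := by
      by_contra h
      have h' : P.isLeader q = true := by
        cases hh : P.isLeader q
        · exact absurd hh h
        · rfl
      have := leader_count_le_one P hC h'
      omega
    have hpath : Relation.ReflTransGen P.Adj q P.qf := (hconn q hLead).2
    set C2 : Multiset Q := C - {q, q} + {P.qf, P.qf} with hC2def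
    have hreach2 : P.Reach C C2 := movePair' P hsym hpath C h2q
    have hcnt : ∀ x : Q, C2.count x
        = C.count x - (if x = q then 2 else 0) + (if x = P.qf then 2 else 0) := by
      intro x
      rw [hC2def, Multiset.count_add, Multiset.count_sub, count_pair', count_pair']
    have hcard2 : C2.card = C.card := by
      rw [hC2def, Multiset.card_add, Multiset.card_sub (pair_le' h2q), card_pair', card_pair']
      have := Multiset.count_le_card q C
      omega
    have hC2 : P.IsConfig C2 := by
      unfold RVProtocol.IsConfig
      rw [hC2def, Multiset.filter_add, Multiset.filter_sub]
      have hfq : ({q, q} : Multiset Q).filter (fun x => P.isLeader x = true) = 0 := by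
        simp [Multiset.insert_eq_cons, Multiset.filter_cons, Multiset.filter_singleton, hLead]
      have hff : ({P.qf, P.qf} : Multiset Q).filter (fun x => P.isLeader x = true) = 0 := by
        simp [Multiset.insert_eq_cons, Multiset.filter_cons, Multiset.filter_singleton, P.hqf]
      rw [hfq, hff, tsub_zero, add_zero]
      exact hC
    have hreachC2 : P.Reach (P.Ci (C2.card - 1)) C2 := by
      rw [hcard2]
      exact Relation.ReflTransGen.trans hreach hreach2
    have hle2 : ∀ x : Q, x ≠ P.qf → C'.count x ≤ C2.count x := by
      intro x hx
      rw [hcnt x, if_neg hx]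
      rcases eq_or_ne x q with rfl | hxq
      · rw [if_pos rfl]
        omega
      · rw [if_neg hxq]
        have := hle x hx
        omega
    have hpar2 : ∀ x : Q, C2.count x % 2 = C'.count x % 2 := by
      intro x
      have hp := hpar x
      rw [hcnt x]
      rcases eq_or_ne x q with rfl | hxq
      · rw [if_pos rfl, if_neg hqf]
        omega
      · rw [if_neg hxq]
        rcases eq_or_ne x P.qf with rfl | hxf
        · rw [if_pos rfl]
          omega
        · rw [if_neg hxf]
          omega
    have hq' : q ∈ Finset.univ.erase P.qf := hq
    have esame : ∑ x ∈ (Finset.univ.erase P.qf).erase q, (C2.count x - C'.count x)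
        = ∑ x ∈ (Finset.univ.erase P.qf).erase q, (C.count x - C'.count x) := by
      refine Finset.sum_congr rfl fun x hx => ?_
      have hxq : x ≠ q := Finset.ne_of_mem_erase hx
      have hxf : x ≠ P.qf := Finset.ne_of_mem_erase (Finset.mem_of_mem_erase hx)
      rw [hcnt x, if_neg hxq, if_neg hxf]
      omega
    have hcq2 : C2.count q = C.count q - 2 := by
      rw [hcnt q, if_pos rfl, if_neg hqf]
      omega
    have hlt2 : (∑ x ∈ Finset.univ.erase P.qf, (C2.count x - C'.count x)) < n := by
      have e1' : C.count q - C'.count q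
          + ∑ x ∈ (Finset.univ.erase P.qf).erase q, (C.count x - C'.count x) = n := by
        rw [← hsum]; exact Finset.add_sum_erase _ (fun x => C.count x - C'.count x) hq'
      have e2' : (∑ x ∈ Finset.univ.erase P.qf, (C2.count x - C'.count x))
          = C2.count q - C'.count q
          + ∑ x ∈ (Finset.univ.erase P.qf).erase q, (C2.count x - C'.count x) :=
        (Finset.add_sum_erase _ (fun x => C2.count x - C'.count x) hq').symm
      rw [e2', esame, hcq2]
      omega
    exact ih _ hlt2 C2 hC2 hreachC2 C' hC' (hcard.trans hcard2.symm) hle2 hpar2 rfl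

end AuxPump

/-- In a symmetric rendez-vous protocol where every process state lies on
a path from `q_i` to `q_f`, if `C` is a configuration reachable from the initial
configuration `C_i^{(|C|-1)}`, then every configuration `C'` with `|C'| = |C|`,
`C'(q) ≤ C(q)` for all `q ≠ q_f`, and `C(q) ≡ C'(q) (mod 2)` for all `q ∈ Q`, is
reachable from `C_i^{(|C'|-1)}`. -/
theorem symmetric_pump_down {Q A : Type} [Fintype Q] [Fintype A] [DecidableEq Q]
    (P : RVProtocol Q A) (hsym : P.IsSymmetric) (hconn : P.Connected)
    (C : Multiset Q) (hC : P.IsConfig C) (hreach : P.Reach (P.Ci (C.card - 1)) C)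
    (C' : Multiset Q) (hC' : P.IsConfig C')
    (hcard : C'.card = C.card)
    (hle : ∀ q : Q, q ≠ P.qf → C'.count q ≤ C.count q)
    (hpar : ∀ q : Q, C.count q % 2 = C'.count q % 2) :
    P.Reach (P.Ci (C'.card - 1)) C' :=
  pump_aux P hsym hconn _ C hC hreach C' hC' hcard hle hpar rfl
end

section
/- Let P be a symmetric rendez-vous protocol in which, for every q ∈ Q_P, the underlying graph has a path from q_i to q and a path from q to q_f. Then there exists B ∈ ℕ such that C_i^(n) →* C_f^(n) for all n ≥ B if and only if there exist an even number n_E ∈ ℕ and an odd number n_O ∈ ℕ such that C_i^(n_E) →* C_f^(n_E) and C_i^(n_O) →* C_f^(n_O). -/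
section CutoffAux

set_option linter.unusedSectionVars false

open RVProtocol

variable {Q A : Type} [DecidableEq Q] {P : RVProtocol Q A}

private lemma rv_count_pair (y z w : Q) : ({y, z} : Multiset Q).count w =
    (if w = y then 1 else 0) + (if w = z then 1 else 0) := by
  by_cases h1 : w = y <;> by_cases h2 : w = z <;>
    simp [h1, h2, Multiset.count_cons, Multiset.count_singleton] <;>
    exact Nat.add_comm _ _

private lemma rv_add_sub_exact (C D S T : Multiset Q)
    (h : ∀ x, S.count x ≤ C.count x) :
    C + D - S + T = C - S + T + D := by
  ext x
  simp only [Multiset.count_add, Multiset.count_sub]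
  have := h x
  omega

private lemma rv_step_card_le {C C' : Multiset Q} (h : P.Step C C') :
    Multiset.card C ≤ Multiset.card C' := by
  obtain ⟨a, q1, q2, q1', q2', _, _, _, _, _, rfl⟩ := h
  have h1 : C ≤ C - {q1, q1'} + {q1, q1'} := le_tsub_add
  have h2 := Multiset.card_le_card h1
  have h3 : Multiset.card ({q1, q1'} : Multiset Q) = 2 := by simp
  have h4 : Multiset.card ({q2, q2'} : Multiset Q) = 2 := by simp
  simp only [Multiset.card_add] at h2 ⊢
  omega

private lemma rv_reach_card_le {C C' : Multiset Q} (h : P.Reach C C') :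
    Multiset.card C ≤ Multiset.card C' := by
  induction h with
  | refl => exact le_rfl
  | tail _ h2 ih => exact le_trans ih (rv_step_card_le h2)

private lemma rv_step_add {C C' : Multiset Q} (h : P.Step C C')
    (hcard : Multiset.card C' ≤ Multiset.card C) (D : Multiset Q) :
    P.Step (C + D) (C' + D) := by
  obtain ⟨a, q1, q2, q1', q2', hr, hs, hc1, hc2, hsum, heq⟩ := h
  have hS : ∀ x, ({q1, q1'} : Multiset Q).count x ≤ C.count x := by
    by_contra hcon
    push_neg at hcon
    obtain ⟨x, hx⟩ := hcon
    rw [rv_count_pair] at hx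
    have hc1x : x = q1 → 0 < C.count x := fun h => by rw [h]; exact hc1
    have hc2x : x = q1' → 0 < C.count x := fun h => by rw [h]; exact hc2
    by_cases e1 : x = q1
    · by_cases e2 : x = q1'
      · -- degenerate case: q1 = q1' = x and C.count x = 1
        rw [if_pos e1, if_pos e2] at hx
        rw [← e1, ← e2] at heq
        have hone : C.count x = 1 := by have := hc1x e1; omega
        have h5 : C - ({x, x} : Multiset Q) = C - {x} := by
          ext y
          by_cases hy : y = x <;>
            simp [Multiset.count_sub, hy, hone, Multiset.count_cons,
              Multiset.count_singleton]
        have hmem : x ∈ C := by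
          rw [← Multiset.count_pos]
          omega
        have hcpos : 0 < Multiset.card C := Multiset.card_pos_iff_exists_mem.mpr ⟨x, hmem⟩
        have hcard' : Multiset.card C' = Multiset.card C + 1 := by
          have h6 : Multiset.card ({q2, q2'} : Multiset Q) = 2 := by simp
          rw [heq, h5, Multiset.sub_singleton, Multiset.card_add,
            Multiset.card_erase_of_mem hmem, h6, Nat.pred_eq_sub_one]
          omega
        omega
      · rw [if_pos e1, if_neg e2] at hx
        have := hc1x e1
        omega
    · by_cases e2 : x = q1'
      · rw [if_neg e1, if_pos e2] at hx
        have := hc2x e2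
        omega
      · rw [if_neg e1, if_neg e2] at hx
        omega
  refine ⟨a, q1, q2, q1', q2', hr, hs, ?_, ?_, ?_, ?_⟩
  · simp only [Multiset.count_add]; omega
  · simp only [Multiset.count_add]; omega
  · simp only [Multiset.count_add]; omega
  · rw [heq, rv_add_sub_exact C D {q1, q1'} {q2, q2'} hS]

private lemma rv_reach_add {C C' : Multiset Q} (h : P.Reach C C')
    (hcard : Multiset.card C' ≤ Multiset.card C) (D : Multiset Q) :
    P.Reach (C + D) (C' + D) := by
  induction h with
  | refl => exact Relation.ReflTransGen.refl
  | @tail b c h1 h2 ih =>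
    have k1 : Multiset.card C ≤ Multiset.card b := rv_reach_card_le h1
    have k2 : Multiset.card b ≤ Multiset.card c := rv_step_card_le h2
    exact (ih (by omega)).tail (rv_step_add h2 (by omega) D)

private lemma rv_pair_step (hsym : P.IsSymmetric) {q q' : Q} (h : P.Adj q q')
    (C : Multiset Q) : P.Step (C + {q, q}) (C + {q', q'}) := by
  obtain ⟨a, ha⟩ := h
  have hcq : (C + ({q, q} : Multiset Q)).count q = C.count q + 2 := by
    simp [Multiset.count_add, rv_count_pair]
  refine ⟨a, q, q', q, q', (hsym q a q').mp ha, ha, ?_, ?_, ?_, ?_⟩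
  · omega
  · omega
  · omega
  · ext x
    simp only [Multiset.count_add, Multiset.count_sub]
    omega

private lemma rv_pair_reach (hsym : P.IsSymmetric) {q q' : Q}
    (h : Relation.ReflTransGen P.Adj q q') (C : Multiset Q) :
    P.Reach (C + {q, q}) (C + {q', q'}) := by
  induction h with
  | refl => exact Relation.ReflTransGen.refl
  | tail _ h2 ih => exact ih.tail (rv_pair_step hsym h2 C)

private lemma rv_rep_two (q : Q) : Multiset.replicate 2 q = ({q, q} : Multiset Q) := by
  rfl

private lemma rv_Ci_add_two (n : ℕ) : P.Ci (n + 2) = P.Ci n + {P.qi, P.qi} := by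
  rw [RVProtocol.Ci, RVProtocol.Ci, Multiset.replicate_add, rv_rep_two, add_right_comm]

private lemma rv_Cf_add_two (n : ℕ) : P.Cf (n + 2) = P.Cf n + {P.qf, P.qf} := by
  rw [RVProtocol.Cf, RVProtocol.Cf, Multiset.replicate_add, rv_rep_two, add_right_comm]

private lemma rv_card_Ci (n : ℕ) : Multiset.card (P.Ci n) = n + 1 := by
  simp [RVProtocol.Ci]

private lemma rv_card_Cf (n : ℕ) : Multiset.card (P.Cf n) = n + 1 := by
  simp [RVProtocol.Cf]

private lemma rv_reach_succ2 (hsym : P.IsSymmetric) (hconn : P.Connected) {n : ℕ}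
    (h : P.Reach (P.Ci n) (P.Cf n)) : P.Reach (P.Ci (n + 2)) (P.Cf (n + 2)) := by
  rw [rv_Ci_add_two, rv_Cf_add_two]
  have h1 : P.Reach (P.Ci n + {P.qi, P.qi}) (P.Ci n + {P.qf, P.qf}) :=
    rv_pair_reach hsym (hconn P.qi P.hqi).2 _
  have h2 : P.Reach (P.Ci n + {P.qf, P.qf}) (P.Cf n + {P.qf, P.qf}) :=
    rv_reach_add h (by rw [rv_card_Ci, rv_card_Cf]) _
  exact h1.trans h2

private lemma rv_reach_add_two_mul (hsym : P.IsSymmetric) (hconn : P.Connected)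
    {n : ℕ} (h : P.Reach (P.Ci n) (P.Cf n)) (k : ℕ) :
    P.Reach (P.Ci (n + 2 * k)) (P.Cf (n + 2 * k)) := by
  induction k with
  | zero => simpa using h
  | succ k ih =>
    have he : n + 2 * (k + 1) = n + 2 * k + 2 := by ring
    rw [he]
    exact rv_reach_succ2 hsym hconn ih

end CutoffAux

/-- A symmetric rendez-vous protocol in which every process state lies on
a path from `q_i` to `q_f` admits a cut-off iff a final configuration is reachable from the
initial configuration both for some even and for some odd number of processes. -/
theorem symmetric_cutoff_iff_even_odd {Q A : Type} [Fintype Q] [Fintype A] [DecidableEq Q]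
    (P : RVProtocol Q A) (hsym : P.IsSymmetric) (hconn : P.Connected) :
    (∃ B : ℕ, ∀ n ≥ B, P.Reach (P.Ci n) (P.Cf n)) ↔
    (∃ nE nO : ℕ, Even nE ∧ Odd nO ∧
      P.Reach (P.Ci nE) (P.Cf nE) ∧ P.Reach (P.Ci nO) (P.Cf nO)) := by
  constructor
  · rintro ⟨B, h⟩
    exact ⟨2 * B, 2 * B + 1, ⟨B, by ring⟩, ⟨B, by ring⟩,
      h _ (by omega), h _ (by omega)⟩
  · rintro ⟨nE, nO, ⟨a, ha⟩, ⟨c, hc⟩, rE, rO⟩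
    refine ⟨nE + nO, fun n hn => ?_⟩
    rcases Nat.even_or_odd n with ⟨b, hb⟩ | ⟨d, hd⟩
    · obtain ⟨k, hk⟩ : ∃ k, n = nE + 2 * k := ⟨b - a, by omega⟩
      rw [hk]
      exact rv_reach_add_two_mul hsym hconn rE k
    · obtain ⟨k, hk⟩ : ∃ k, n = nO + 2 * k := ⟨d - c, by omega⟩
      rw [hk]
      exact rv_reach_add_two_mul hsym hconn rO k
end

section
/- (Soundness of the even-odd abstraction.) Let P be a symmetric rendez-vous protocol in which, for every q ∈ Q_P, the underlying graph has a path from q_i to q and a path from q to q_f. If (q_i^L, γ_i^E) ⇝* (q_f^L, γ_f^E), then there exists an even n ∈ ℕ such that C_i^(n) →* C_f^(n); and if (q_i^L, γ_i^O) ⇝* (q_f^L, γ_f^O), then there exists an odd n ∈ ℕ such that C_i^(n) →* C_f^(n). -/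
/-- Flip the parity values (`false` = even `E`, `true` = odd `O`) of `γ` at `x1` and `x2`,
with no change at all if `x1 = x2`. -/
def flipTwo {X : Type} [DecidableEq X] (γ : X → Bool) (x1 x2 : X) : X → Bool :=
  if x1 = x2 then γ
  else fun x => if x = x1 ∨ x = x2 then !(γ x) else γ x

namespace RVProtocol

variable {Q A : Type} [DecidableEq Q] (P : RVProtocol Q A)

/-- The process states `Q_P` of the protocol. -/
abbrev ProcState : Type := {q : Q // P.isLeader q = false}

/-- The leader states `Q_L` of the protocol. -/
abbrev LeadState : Type := {q : Q // P.isLeader q = true}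

/-- Even-odd abstract configurations: a leader state together with a parity
(`false` = even `E`, `true` = odd `O`) for each process state. -/
abbrev AbsConf : Type := P.LeadState × (P.ProcState → Bool)

/-- One step of the even-odd abstraction: either the leader takes an edge together with
one process (case 1), or two processes perform a rendez-vous (case 2); the parities are
updated by flipping at the (distinct) endpoints of each edge used. -/
def EOStep (c1 c2 : P.AbsConf) : Prop :=
  (∃ (a : A) (q1 q2 : P.ProcState),
      ((c1.1 : Q), RVAct.send a, (c2.1 : Q)) ∈ P.E ∧
      ((q1 : Q), RVAct.send a, (q2 : Q)) ∈ P.E ∧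
      c2.2 = flipTwo c1.2 q1 q2) ∨
  (c1.1 = c2.1 ∧
    ∃ (a : A) (q1 q2 q3 q4 : P.ProcState),
      ((q1 : Q), RVAct.send a, (q2 : Q)) ∈ P.E ∧
      ((q3 : Q), RVAct.send a, (q4 : Q)) ∈ P.E ∧
      c2.2 = flipTwo (flipTwo c1.2 q1 q2) q3 q4)

/-- Reachability in the even-odd abstraction. -/
def EOReach : P.AbsConf → P.AbsConf → Prop := Relation.ReflTransGen P.EOStep

/-- The abstract configuration `(q_i^L, γ_i^E)`: all parities even. -/
def absIE : P.AbsConf := (⟨P.qiL, P.hqiL⟩, fun _ => false)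

/-- The abstract configuration `(q_f^L, γ_f^E)`: all parities even. -/
def absFE : P.AbsConf := (⟨P.qfL, P.hqfL⟩, fun _ => false)

/-- The abstract configuration `(q_i^L, γ_i^O)`: parity odd exactly at `q_i`. -/
def absIO : P.AbsConf := (⟨P.qiL, P.hqiL⟩, fun q => decide ((q : Q) = P.qi))

/-- The abstract configuration `(q_f^L, γ_f^O)`: parity odd exactly at `q_f`. -/
def absFO : P.AbsConf := (⟨P.qfL, P.hqfL⟩, fun q => decide ((q : Q) = P.qf))

/-- The concretization `[[(q^L, γ)]]` of an abstract configuration: configurations `C`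
with `C(q^L) = 1` and, for each process state `q`, `C(q)` even iff `γ(q) = E`. -/
def Interp (c : P.AbsConf) (C : Multiset Q) : Prop :=
  P.IsConfig C ∧ C.count (c.1 : Q) = 1 ∧
    ∀ q : P.ProcState, (Even (C.count (q : Q)) ↔ c.2 q = false)

end RVProtocol

/-!
Each abstract step is simulated with four fresh processes taken from `q_i`. Symmetric edges
let two processes in the same state walk together along any path of the underlying graph,
so two fresh processes are brought to the source of each process edge the step uses; the
rendez-vous then changes the multiplicities exactly at the endpoints of its edges, which
is the parity flip of the abstraction, and unused pairs leave all parities unchanged.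
After the whole abstract run every state other than `q_f` holds an even number of processes,
and these pairs walk to `q_f`. The number of processes is `4k` plus the parity at `q_i`.
-/

/-- The parity vector of a multiset, with `false` for even as in `AbsConf`. -/
def countParity {X : Type} [DecidableEq X] (B : Multiset X) (x : X) : Bool :=
  decide (Odd (B.count x))

theorem flipTwo_self {X : Type} [DecidableEq X] (γ : X → Bool) (x : X) : flipTwo γ x x = γ :=
  if_pos rfl

theorem countParity_add_pair {X : Type} [DecidableEq X] (B : Multiset X) (a b : X) :
    countParity (B + {a, b}) = flipTwo (countParity B) a b := by
  funext x
  have hcount : (B + {a, b}).count x =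
      B.count x + (if x = a then 1 else 0) + (if x = b then 1 else 0) := by
    simp only [Multiset.count_add, Multiset.insert_eq_cons, Multiset.count_cons,
      Multiset.count_singleton]
    split_ifs <;> omega
  unfold countParity flipTwo
  rw [hcount]
  by_cases hab : a = b
  · subst hab
    split_ifs <;> simp_all [Nat.odd_add_one]
  · split_ifs <;> simp_all [Nat.odd_add_one, -Nat.not_odd_iff_even]

namespace RVProtocol

variable {Q A : Type} (P : RVProtocol Q A)

def procQi : P.ProcState := ⟨P.qi, P.hqi⟩

def procQf : P.ProcState := ⟨P.qf, P.hqf⟩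

def mkConfig (l : P.LeadState) (B : Multiset P.ProcState) : Multiset Q :=
  B.map Subtype.val + {(l : Q)}

theorem mkConfig_add (l : P.LeadState) (B Y : Multiset P.ProcState) :
    P.mkConfig l (B + Y) = P.mkConfig l B + Y.map Subtype.val := by
  simp only [mkConfig, Multiset.map_add]
  abel

end RVProtocol

namespace RVProtocol

variable {Q A : Type} [DecidableEq Q] (P : RVProtocol Q A)

/-- `Step` itself is not stable under adding idle processes, since its count condition is
read off the whole configuration. -/
def FrameReach (C C' : Multiset Q) : Prop := ∀ X, P.Reach (C + X) (C' + X)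

namespace FrameReach

variable {P}

theorem refl (C : Multiset Q) : P.FrameReach C C := fun _ => Relation.ReflTransGen.refl

theorem trans {C C' C'' : Multiset Q} (h : P.FrameReach C C') (h' : P.FrameReach C' C'') :
    P.FrameReach C C'' := fun X => (h X).trans (h' X)

instance : Trans P.FrameReach P.FrameReach P.FrameReach := ⟨trans⟩

theorem add_right {C C' : Multiset Q} (h : P.FrameReach C C') (Y : Multiset Q) :
    P.FrameReach (C + Y) (C' + Y) := fun X => by simpa only [add_assoc] using h (Y + X)

theorem add_left {C C' : Multiset Q} (h : P.FrameReach C C') (Y : Multiset Q) :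
    P.FrameReach (Y + C) (Y + C') := by simpa only [add_comm Y] using h.add_right Y

theorem reach {C C' : Multiset Q} (h : P.FrameReach C C') : P.Reach C C' := by
  simpa using h 0

end FrameReach

theorem frameReach_rendezvous {a : A} {r r' s s' : Q}
    (hr : (r, RVAct.recv a, r') ∈ P.E) (hs : (s, RVAct.send a, s') ∈ P.E) :
    P.FrameReach {r, s} {r', s'} := by
  intro X
  have hr₀ : 0 < ({r, s} + X).count r := Multiset.count_pos.mpr (by simp)
  have hs₀ : 0 < ({r, s} + X).count s := Multiset.count_pos.mpr (by simp)
  exact .single ⟨a, r, r', s, s', hr, hs, hr₀, hs₀, by omega,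
    by rw [add_tsub_cancel_left, add_comm]⟩

theorem frameReach_pair (hsym : P.IsSymmetric) {q q' : Q}
    (h : Relation.ReflTransGen P.Adj q q') :
    P.FrameReach {q, q} {q', q'} := by
  induction h with
  | refl => exact FrameReach.refl _
  | tail _ hadj ih =>
    obtain ⟨a, ha⟩ := hadj
    exact ih.trans (P.frameReach_rendezvous ((hsym _ _ _).mp ha) ha)

theorem frameReach_leader_rendezvous (hsym : P.IsSymmetric) (hconn : P.Connected) {a : A}
    {l l' : Q} {q1 q2 : P.ProcState} (hleader : (l, RVAct.send a, l') ∈ P.E)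
    (hproc : ((q1 : Q), RVAct.send a, (q2 : Q)) ∈ P.E) :
    P.FrameReach ({P.qi, P.qi} + {l}) ({(q1 : Q), (q2 : Q)} + {l'}) :=
  calc {P.qi, P.qi} + {l}
    P.FrameReach _ ({(q1 : Q), (q1 : Q)} + {l}) :=
      (P.frameReach_pair hsym (hconn q1 q1.2).1).add_right _
    _ = {(q1 : Q)} + {(q1 : Q), l} := by
      simp only [Multiset.insert_eq_cons, ← Multiset.singleton_add]; abel
    P.FrameReach _ ({(q1 : Q)} + {(q2 : Q), l'}) :=
      (P.frameReach_rendezvous ((hsym _ _ _).mp hproc) hleader).add_left _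
    _ = {(q1 : Q), (q2 : Q)} + {l'} := by
      simp only [Multiset.insert_eq_cons, ← Multiset.singleton_add]; abel

theorem frameReach_process_rendezvous (hsym : P.IsSymmetric) (hconn : P.Connected) {a : A}
    {q1 q2 q3 q4 : P.ProcState} (h12 : ((q1 : Q), RVAct.send a, (q2 : Q)) ∈ P.E)
    (h34 : ((q3 : Q), RVAct.send a, (q4 : Q)) ∈ P.E) :
    P.FrameReach ({P.qi, P.qi} + {P.qi, P.qi}) ({(q1 : Q), (q2 : Q)} + {(q3 : Q), (q4 : Q)}) :=
  calc {P.qi, P.qi} + {P.qi, P.qi}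
    P.FrameReach _ ({(q1 : Q), (q1 : Q)} + {P.qi, P.qi}) :=
      (P.frameReach_pair hsym (hconn q1 q1.2).1).add_right _
    P.FrameReach _ ({(q1 : Q), (q1 : Q)} + {(q3 : Q), (q3 : Q)}) :=
      (P.frameReach_pair hsym (hconn q3 q3.2).1).add_left _
    _ = {(q1 : Q)} + {(q3 : Q)} + {(q3 : Q), (q1 : Q)} := by
      simp only [Multiset.insert_eq_cons, ← Multiset.singleton_add]; abel
    P.FrameReach _ ({(q1 : Q)} + {(q3 : Q)} + {(q4 : Q), (q2 : Q)}) :=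
      (P.frameReach_rendezvous ((hsym _ _ _).mp h34) h12).add_left _
    _ = {(q1 : Q), (q2 : Q)} + {(q3 : Q), (q4 : Q)} := by
      simp only [Multiset.insert_eq_cons, ← Multiset.singleton_add]; abel

theorem exists_frameReach_of_eoStep (hsym : P.IsSymmetric) (hconn : P.Connected)
    {c c' : P.AbsConf} (h : P.EOStep c c') {B : Multiset P.ProcState} (hB : countParity B = c.2) :
    ∃ B', countParity B' = c'.2 ∧ B'.card = B.card + 4 ∧
      P.FrameReach (P.mkConfig c.1 (B + Multiset.replicate 4 P.procQi)) (P.mkConfig c'.1 B') := by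
  rcases h with ⟨a, q1, q2, hleader, hproc, hγ⟩ |
    ⟨hleader, a, q1, q2, q3, q4, h12, h34, hγ⟩
  · refine ⟨B + {q1, q2} + {P.procQi, P.procQi}, ?_, by simp, ?_⟩
    · rw [countParity_add_pair, flipTwo_self, countParity_add_pair, hB, hγ]
    convert (P.frameReach_leader_rendezvous hsym hconn hleader hproc).add_right
      ((B + {P.procQi, P.procQi}).map Subtype.val) using 1 <;>
      simp only [mkConfig, procQi, Multiset.map_add, Multiset.insert_eq_cons,
        ← Multiset.singleton_add, Multiset.replicate_succ, Multiset.replicate_zero,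
        Multiset.map_singleton, add_zero] <;> abel
  · refine ⟨B + {q1, q2} + {q3, q4}, ?_, by simp, ?_⟩
    · rw [countParity_add_pair, countParity_add_pair, hB, hγ]
    rw [← hleader]
    convert (P.frameReach_process_rendezvous hsym hconn h12 h34).add_right
      (P.mkConfig c.1 B) using 1 <;>
      simp only [mkConfig, procQi, Multiset.map_add, Multiset.insert_eq_cons,
        ← Multiset.singleton_add, Multiset.replicate_succ, Multiset.replicate_zero,
        Multiset.map_singleton, add_zero] <;> abel

theorem exists_frameReach_of_eoReach (hsym : P.IsSymmetric) (hconn : P.Connected)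
    {c c' : P.AbsConf} (h : P.EOReach c c') {B : Multiset P.ProcState} (hB : countParity B = c.2) :
    ∃ k B', countParity B' = c'.2 ∧ B'.card = B.card + 4 * k ∧
      P.FrameReach (P.mkConfig c.1 (B + Multiset.replicate (4 * k) P.procQi))
        (P.mkConfig c'.1 B') := by
  induction h with
  | refl => exact ⟨0, B, hB, rfl, by simpa using FrameReach.refl _⟩
  | tail _ hstep ih =>
    obtain ⟨k, B₁, hB₁, hcard₁, hreach₁⟩ := ih
    obtain ⟨B₂, hB₂, hcard₂, hreach₂⟩ :=
      P.exists_frameReach_of_eoStep hsym hconn hstep hB₁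
    refine ⟨k + 1, B₂, hB₂, by omega, ?_⟩
    calc P.mkConfig _ (B + Multiset.replicate (4 * (k + 1)) P.procQi)
      _ = P.mkConfig _ (B + Multiset.replicate (4 * k) P.procQi) +
          (Multiset.replicate 4 P.procQi).map Subtype.val := by
        rw [← mkConfig_add, mul_add, Multiset.replicate_add, add_assoc]
      P.FrameReach _ (P.mkConfig _ (B₁ + Multiset.replicate 4 P.procQi)) := by
        simpa only [mkConfig_add] using
          hreach₁.add_right ((Multiset.replicate 4 P.procQi).map Subtype.val)
      P.FrameReach _ _ := hreach₂

theorem frameReach_replicate_qf (hsym : P.IsSymmetric) (hconn : P.Connected)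
    (B : Multiset P.ProcState) (hB : ∀ q ≠ P.procQf, Even (B.count q)) :
    P.FrameReach (B.map Subtype.val) (Multiset.replicate B.card P.qf) := by
  induction hn : B.card using Nat.strong_induction_on generalizing B with
  | _ n ih =>
  subst hn
  by_cases hall : ∀ q ∈ B, q = P.procQf
  · rw [Multiset.eq_replicate_card.mpr hall, Multiset.map_replicate, Multiset.card_replicate]
    exact FrameReach.refl _
  push Not at hall
  obtain ⟨q, hqB, hq⟩ := hall
  have hle : Multiset.replicate 2 q ≤ B := by
    rw [← Multiset.le_count_iff_replicate_le]
    obtain ⟨m, hm⟩ := hB q hq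
    have := Multiset.count_pos.mpr hqB
    omega
  obtain ⟨B₀, rfl⟩ : ∃ B₀, B = Multiset.replicate 2 q + B₀ :=
    ⟨B - Multiset.replicate 2 q, (add_tsub_cancel_of_le hle).symm⟩
  have hB₀ : ∀ q' ≠ P.procQf, Even (B₀.count q') := by
    intro q' hq'
    have := hB q' hq'
    rw [Multiset.count_add, Multiset.count_replicate] at this
    split_ifs at this <;> simpa [Nat.even_add] using this
  calc (Multiset.replicate 2 q + B₀).map Subtype.val
    _ = {(q : Q), (q : Q)} + B₀.map Subtype.val := by simp [Multiset.replicate_succ]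
    P.FrameReach _ ({P.qf, P.qf} + B₀.map Subtype.val) :=
      (P.frameReach_pair hsym (hconn q q.2).2).add_right _
    P.FrameReach _ ({P.qf, P.qf} + Multiset.replicate B₀.card P.qf) :=
      (ih _ (by simp) B₀ hB₀ rfl).add_left _
    _ = _ := by simp [Multiset.replicate_succ]

theorem exists_reach_of_eoReach (hsym : P.IsSymmetric) (hconn : P.Connected) (j : ℕ)
    {γ γ' : P.ProcState → Bool} (hγ : countParity (Multiset.replicate j P.procQi) = γ)
    (hγ' : ∀ q ≠ P.procQf, γ' q = false)
    (h : P.EOReach (⟨P.qiL, P.hqiL⟩, γ) (⟨P.qfL, P.hqfL⟩, γ')) :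
    ∃ k, P.Reach (P.Ci (j + 4 * k)) (P.Cf (j + 4 * k)) := by
  obtain ⟨k, B, hB, hcard, hreach⟩ := P.exists_frameReach_of_eoReach hsym hconn h hγ
  have hgather := P.frameReach_replicate_qf hsym hconn B fun q hq => by
    simpa [countParity, hγ' q hq] using congrFun hB q
  refine ⟨k, ?_⟩
  have hCi : P.Ci (j + 4 * k) = P.mkConfig ⟨P.qiL, P.hqiL⟩
      (Multiset.replicate j P.procQi + Multiset.replicate (4 * k) P.procQi) := by
    simp [Ci, mkConfig, procQi, Multiset.replicate_add]
  rw [Multiset.card_replicate] at hcard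
  rw [hCi, Cf, ← hcard]
  exact (hreach.trans (hgather.add_right _)).reach

end RVProtocol

theorem eo_abstraction_sound_general {Q A : Type} [DecidableEq Q]
    (P : RVProtocol Q A) (hsym : P.IsSymmetric) (hconn : P.Connected) :
    (P.EOReach P.absIE P.absFE →
      ∃ n : ℕ, Even n ∧ P.Reach (P.Ci n) (P.Cf n)) ∧
    (P.EOReach P.absIO P.absFO →
      ∃ n : ℕ, Odd n ∧ P.Reach (P.Ci n) (P.Cf n)) := by
  constructor
  · intro h
    obtain ⟨k, hk⟩ := P.exists_reach_of_eoReach hsym hconn 0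
      (by funext q; simp [countParity]) (fun _ _ => rfl) h
    exact ⟨0 + 4 * k, ⟨2 * k, by ring⟩, hk⟩
  · intro h
    obtain ⟨k, hk⟩ := P.exists_reach_of_eoReach hsym hconn 1
      (by
        funext q
        by_cases hq : (q : Q) = P.qi <;>
          simp [countParity, RVProtocol.procQi, Subtype.ext_iff, hq])
      (fun q hq => by simpa [RVProtocol.absFO, RVProtocol.procQf, Subtype.ext_iff] using hq) h
    exact ⟨1 + 4 * k, ⟨2 * k, by ring⟩, hk⟩

/-- **Soundness of the even-odd abstraction.** In a symmetric rendez-vous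
protocol whose every process state lies on a path from `q_i` to `q_f`: if
`(q_i^L,γ_i^E) ⇝* (q_f^L,γ_f^E)` then `C_i^{(n)} →* C_f^{(n)}` for some even `n`; and if
`(q_i^L,γ_i^O) ⇝* (q_f^L,γ_f^O)` then `C_i^{(n)} →* C_f^{(n)}` for some odd `n`. -/
theorem eo_abstraction_sound {Q A : Type} [Fintype Q] [Fintype A] [DecidableEq Q]
    (P : RVProtocol Q A) (hsym : P.IsSymmetric) (hconn : P.Connected) :
    (P.EOReach P.absIE P.absFE →
      ∃ n : ℕ, Even n ∧ P.Reach (P.Ci n) (P.Cf n)) ∧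
    (P.EOReach P.absIO P.absFO →
      ∃ n : ℕ, Odd n ∧ P.Reach (P.Ci n) (P.Cf n)) :=
  eo_abstraction_sound_general P hsym hconn
end
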